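/- arXiv:2310.07693 — 10 statements merged into one kernel-verified Lean document; each statement's English description precedes it below -/
import Mathlib

section
/- The Ramsey ideal R, regarded as a subset of the Polish space P([ω]²) ≅ 2^{[ω]²}, is Π¹₁-complete: its complement is analytic, and for every Polish space Y and every coanalytic set B ⊆ Y there is a Borel measurable function f : Y → P([ω]²) with f⁻¹(R) = B. -/
open MeasureTheory

/-- The set `[ω]²` of two-element subsets of `ω`. -/
abbrev TwoElt : Type := {s : Finset ℕ // s.card = 2}

/-- The Ramsey ideal: all `A ⊆ [ω]²` such that there is no infinite `B ⊆ ω`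
with `[B]² ⊆ A`, viewed inside the Cantor space `2^{[ω]²} ≅ P([ω]²)`. -/
def ramseyIdeal : Set (TwoElt → Bool) :=
  {x | ¬ ∃ B : Set ℕ, B.Infinite ∧ ∀ s : TwoElt, ↑s.1 ⊆ B → x s = true}

/-!
An analytic set `A` is empty or the range of a continuous `g : (ℕ → ℕ) → Y`. In the second case
`y ∈ A` iff the tree of finite sequences `u` with `y ∈ closure (g '' [u])` has an infinite branch
(by continuity of `g` and the Hausdorff property), and membership of a fixed `u` in this tree is a
closed condition on `y`. A tree has an infinite branch iff it contains an infinite chain, i.e.,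
coding nodes by natural numbers, iff the colouring of `{m, n}` by "the nodes coded by `m` and `n`
lie in the tree and are comparable" has an infinite homogeneous set. So `y ↦` that colouring is a
Borel map pulling the Ramsey ideal back to `Aᶜ`. The complement of the ideal is the projection of
the Borel set of pairs (infinite `H ⊆ ℕ`, colouring homogeneous on `H`), hence analytic.
-/

open Descriptive Function Set Topology Filter

namespace Descriptive.Tree

variable {α : Type*}

def comparableIn (T : tree α) (u v : List α) : Prop :=
  u ∈ T ∧ v ∈ T ∧ (u <+: v ∨ v <+: u)

theorem exists_branch_of_infinite_chain (T : tree α) {C : Set (List α)}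
    (hCT : C ⊆ T) (hC : C.Infinite) (hchain : IsChain (· <+: ·) C) :
    ∃ a : Stream' α, ∀ n, a.take n ∈ T := by
  have hlen : (List.length '' C).Infinite := hC.image fun u hu v hv huv => by
    rcases eq_or_ne u v with rfl | hne
    · rfl
    · rcases hchain hu hv hne with h | h
      exacts [h.eq_of_length huv, (h.eq_of_length huv.symm).symm]
  have hlong : ∀ n, ∃ u ∈ C, n < u.length := fun n => by
    obtain ⟨_, ⟨u, hu, rfl⟩, hn⟩ := hlen.exists_gt n
    exact ⟨u, hu, hn⟩
  choose w hwC hwlen using hlong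
  have agree : ∀ u ∈ C, ∀ i (hi : i < u.length), u[i] = (w i)[i]'(hwlen i) := by
    intro u hu i hi
    rcases eq_or_ne u (w i) with rfl | hne
    · rfl
    · rcases hchain hu (hwC i) hne with h | h
      exacts [h.getElem hi, (h.getElem (hwlen i)).symm]
  obtain ⟨a, ha⟩ : ∃ a : Stream' α, ∀ i, a.get i = (w i)[i]'(hwlen i) := ⟨_, fun _ => rfl⟩
  refine ⟨a, fun n => ?_⟩
  have : a.take n = (w n).take n :=
    List.ext_getElem (by simp [(hwlen n).le]) fun i _ _ => by
      rw [Stream'.take_get, ha, List.getElem_take, agree _ (hwC n)]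
  rw [this]
  exact mem_of_prefix (List.take_prefix _ _) (hCT (hwC n))

theorem exists_branch_iff_exists_infinite_pairwise_comparableIn (T : tree α) :
    (∃ a : Stream' α, ∀ n, a.take n ∈ T) ↔
      ∃ C : Set (List α), C.Infinite ∧ C.Pairwise (comparableIn T) := by
  constructor
  · rintro ⟨a, ha⟩
    refine ⟨range (Stream'.take · a), infinite_range_of_injective fun m n h => ?_, ?_⟩
    · simpa using congrArg List.length h
    · rintro _ ⟨m, rfl⟩ _ ⟨n, rfl⟩ -
      exact ⟨ha m, ha n, (le_total m n).imp (Stream'.take_prefix_take_left m n a)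
        (Stream'.take_prefix_take_left n m a)⟩
  · rintro ⟨C, hC, hcomp⟩
    refine exists_branch_of_infinite_chain T (fun u hu => ?_) hC (hcomp.mono' fun _ _ h => h.2.2)
    obtain ⟨v, hv, hvu⟩ := hC.nontrivial.exists_ne u
    exact (hcomp hu hv hvu.symm).1

end Descriptive.Tree

theorem Equiv.exists_infinite_pairwise_onFun_iff {β γ : Type*} (e : β ≃ γ)
    (r : γ → γ → Prop) :
    (∃ H : Set β, H.Infinite ∧ H.Pairwise (r on e)) ↔ ∃ C : Set γ, C.Infinite ∧ C.Pairwise r := by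
  constructor
  · rintro ⟨H, hH, hr⟩
    exact ⟨e '' H, hH.image e.injective.injOn, e.injective.injOn.pairwise_image.2 hr⟩
  · rintro ⟨C, hC, hr⟩
    exact ⟨e ⁻¹' C, hC.preimage (by simp), fun x hx y hy hxy => hr hx hy (e.injective.ne hxy)⟩

open Classical in
noncomputable def pairColoring (R : ℕ → ℕ → Prop) (s : TwoElt) : Bool :=
  decide ((s.1 : Set ℕ).Pairwise R)

theorem pairColoring_mem_ramseyIdeal_iff (R : ℕ → ℕ → Prop) :
    pairColoring R ∈ ramseyIdeal ↔ ¬ ∃ H : Set ℕ, H.Infinite ∧ H.Pairwise R := by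
  simp only [ramseyIdeal, pairColoring, mem_ofPred_eq, decide_eq_true_eq]
  refine not_congr <| exists_congr fun H => and_congr_right fun _ =>
    ⟨fun h m hm n hn hmn => ?_, fun h s hs => h.mono hs⟩
  refine h ⟨{m, n}, Finset.card_pair hmn⟩ ?_ (by simp) (by simp) hmn
  simp [insert_subset_iff, hm, hn]

theorem Descriptive.Tree.pairColoring_comparableIn_mem_ramseyIdeal_iff {α : Type*}
    (T : tree α) (e : ℕ ≃ List α) :
    pairColoring (comparableIn T on e) ∈ ramseyIdeal ↔ ¬ ∃ a : Stream' α, ∀ n, a.take n ∈ T := by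
  rw [pairColoring_mem_ramseyIdeal_iff, e.exists_infinite_pairwise_onFun_iff,
    exists_branch_iff_exists_infinite_pairwise_comparableIn]

def List.cylinder {α : Type*} (u : List α) : Set (Stream' α) :=
  {a | a.take u.length = u}

theorem List.IsPrefix.cylinder_subset {α : Type*} {u v : List α} (h : u <+: v) :
    v.cylinder ⊆ u.cylinder := fun (a : Stream' α) (ha : a.take v.length = v) => by
  change a.take u.length = u
  rw [List.prefix_iff_eq_take.1 h, ← ha, Stream'.take_take, min_eq_right h.length_le]
  simp

theorem Stream'.mem_cylinder_take_iff {α : Type*} {a b : Stream' α} {n : ℕ} :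
    b ∈ (a.take n).cylinder ↔ ∀ i < n, b.get i = a.get i := by
  simp only [List.cylinder, mem_ofPred_eq, Stream'.length_take]
  constructor
  · intro h i hi
    simpa [Stream'.getElem?_take hi] using congrArg (·[i]?) h
  · exact fun h => List.ext_getElem (by simp) fun i hi _ => by simp [h i (by simpa using hi)]

section closureTree

variable {α Y : Type*} [TopologicalSpace α] [DiscreteTopology α] [TopologicalSpace Y]

theorem exists_cylinder_take_subset {a : ℕ → α} {U : Set (ℕ → α)} (hU : U ∈ 𝓝 a) :
    ∃ n, (Stream'.take n a).cylinder ⊆ U := by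
  obtain ⟨_, ⟨x, n, rfl⟩, hax, hsub⟩ :=
    (PiNat.isTopologicalBasis_cylinders fun _ => α).mem_nhds_iff.1 hU
  refine ⟨n, fun b hb => hsub ?_⟩
  rw [← PiNat.mem_cylinder_iff_eq.1 hax]
  exact Stream'.mem_cylinder_take_iff.1 hb

def closureTree (g : (ℕ → α) → Y) (y : Y) : tree α :=
  ⟨{u | y ∈ closure (g '' u.cylinder)}, fun u a h =>
    closure_mono (image_mono (List.prefix_append u [a]).cylinder_subset) h⟩

theorem eq_of_forall_mem_closure_image_cylinder_take [T2Space Y] {g : (ℕ → α) → Y}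
    (hg : Continuous g) {a : ℕ → α} {y : Y}
    (h : ∀ n, y ∈ closure (g '' (Stream'.take n a).cylinder)) : y = g a := by
  have : ClusterPt y (map g (𝓝 a)) := clusterPt_iff_forall_mem_closure.2 fun s hs => by
    obtain ⟨n, hn⟩ := exists_cylinder_take_subset hs
    exact closure_mono (image_subset_iff.2 hn) (h n)
  exact eq_of_nhds_neBot (this.mono hg.continuousAt)

theorem mem_range_iff_exists_branch_closureTree [T2Space Y] {g : (ℕ → α) → Y}
    (hg : Continuous g) (y : Y) :
    y ∈ range g ↔ ∃ a : Stream' α, ∀ n, a.take n ∈ closureTree g y := by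
  constructor
  · rintro ⟨a, rfl⟩
    exact ⟨a, fun n => subset_closure <|
      mem_image_of_mem g (Stream'.mem_cylinder_take_iff.2 fun _ _ => rfl)⟩
  · rintro ⟨a, ha⟩
    exact ⟨a, (eq_of_forall_mem_closure_image_cylinder_take hg ha).symm⟩

end closureTree

theorem MeasureTheory.AnalyticSet.exists_tree_representation {Y : Type*} [TopologicalSpace Y]
    [T2Space Y] {A : Set Y} (hA : AnalyticSet A) :
    ∃ T : Y → tree ℕ, (∀ u, IsClosed {y | u ∈ T y}) ∧
      ∀ y, y ∈ A ↔ ∃ a : Stream' ℕ, ∀ n, a.take n ∈ T y := by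
  rcases AnalyticSet_def A ▸ hA with rfl | ⟨g, hg, rfl⟩
  · exact ⟨fun _ => ⊥, fun _ => by simp, fun y => by simp⟩
  · exact ⟨closureTree g, fun _ => isClosed_closure, mem_range_iff_exists_branch_closureTree hg⟩

theorem exists_measurable_reduction_to_ramseyIdeal {Y : Type*} [MeasurableSpace Y] {A : Set Y}
    (T : Y → tree ℕ) (hT : ∀ u, MeasurableSet {y | u ∈ T y})
    (hA : ∀ y, y ∈ A ↔ ∃ a : Stream' ℕ, ∀ n, a.take n ∈ T y) :
    ∃ f : Y → TwoElt → Bool, Measurable f ∧ f ⁻¹' ramseyIdeal = Aᶜ := by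
  let e : ℕ ≃ List ℕ := (Denumerable.eqv (List ℕ)).symm
  refine ⟨fun y => pairColoring (Tree.comparableIn (T y) on e), ?_, ?_⟩
  · refine measurable_pi_lambda _ fun s => measurable_to_bool ?_
    have hT' : ∀ u, Measurable fun y => u ∈ T y := fun u => measurableSet_setOfPred.1 (hT u)
    simp only [pairColoring, preimage, mem_singleton_iff, decide_eq_true_eq,
      measurableSet_setOfPred]
    unfold Set.Pairwise onFun Tree.comparableIn
    fun_prop
  · ext y
    simp [Tree.pairColoring_comparableIn_mem_ramseyIdeal_iff, hA]

theorem analyticSet_compl_ramseyIdeal : AnalyticSet ramseyIdealᶜ := by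
  let S : Set ((ℕ → Bool) × (TwoElt → Bool)) :=
    {p | {n | p.1 n = true}.Infinite ∧ ∀ s : TwoElt, (∀ n ∈ s.1, p.1 n = true) → p.2 s = true}
  have hS : MeasurableSet S := by
    simp only [S, ← Nat.frequently_atTop_iff_infinite, frequently_atTop, measurableSet_setOfPred]
    fun_prop
  convert hS.analyticSet_image measurable_snd
  ext x
  simp only [ramseyIdeal, mem_compl_iff, mem_ofPred_eq, not_not, mem_image, Prod.exists, S,
    exists_eq_right]
  constructor
  · rintro ⟨H, hH, hx⟩
    classical
    exact ⟨fun n => decide (n ∈ H), by simpa using hH,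
      fun s hs => hx s fun n hn => by simpa using hs n hn⟩
  · rintro ⟨b, hb, hx⟩
    exact ⟨{n | b n = true}, hb, fun s hs => hx s fun n hn => hs hn⟩

/-- The Ramsey ideal is `Π¹₁`-complete: its complement is analytic, and every
coanalytic subset of every Polish space Borel-reduces to it. -/
theorem ramseyIdeal_coanalytic_complete :
    AnalyticSet ramseyIdealᶜ ∧
      ∀ (Y : Type) [TopologicalSpace Y] [PolishSpace Y]
        [MeasurableSpace Y] [BorelSpace Y] (B : Set Y),
        AnalyticSet Bᶜ →
          ∃ f : Y → (TwoElt → Bool), Measurable f ∧ f ⁻¹' ramseyIdeal = B := by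
  refine ⟨analyticSet_compl_ramseyIdeal, fun Y _ _ _ _ B hB => ?_⟩
  obtain ⟨T, hT, hBT⟩ := hB.exists_tree_representation
  simpa using exists_measurable_reduction_to_ramseyIdeal T (fun u => (hT u).measurableSet) hBT
end

section
/- The Hindman ideal H, regarded as a subset of the Polish space P(ω) ≅ 2^ω, is Π¹₁-complete: its complement is analytic, and for every Polish space Y and every coanalytic set B ⊆ Y there is a Borel measurable function f : Y → P(ω) with f⁻¹(H) = B. -/
open MeasureTheory

/-- `FS B` is the set of all finite sums of distinct elements of `B`. -/
def FS (B : Set ℕ) : Set ℕ :=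
  {n | ∃ F : Finset ℕ, ↑F ⊆ B ∧ F.Nonempty ∧ ∑ i ∈ F, i = n}

/-- `A ⊆ ω` is an IP-set if there is an infinite `B ⊆ A` with `FS B ⊆ A`. -/
def IsIP (A : Set ℕ) : Prop :=
  ∃ B : Set ℕ, B.Infinite ∧ B ⊆ A ∧ FS B ⊆ A

/-- The Hindman ideal: all non-IP-sets, viewed inside the Cantor space `2^ω ≅ P(ω)`. -/
def hindmanIdeal : Set (ℕ → Bool) :=
  {x | ¬ IsIP {n | x n = true}}

/-!
The complement of the Hindman ideal is the projection of the Borel set of pairs `(A, B)` with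
`B` infinite and `FS B ⊆ A`.

For hardness, write an analytic set as the range of a continuous `g` on Baire space. For each
`y`, the finite sequences `l` with some `v` extending `l` and `dist (g v) y < 2 ^ (-|l|)` form a
tree that has an infinite branch iff `y ∈ range g`. Send `y` to the set of `n` whose binary
digits code a chain of nodes of this tree; this depends on `y` in a Borel way. The initial
segments of a branch give the IP set generated by the powers `2 ^ code`. Conversely, an IP
subset contains finite sums `y 0, y 1, …` such that `y i + y j` is also in it and adds without
carries; then one digit of each `y i` codes a node, any two of these nodes are comparable, and
the infinite chain they form runs along a branch.
-/

open Set Filter Topology Metric Function Encodable Denumerable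

namespace HindmanIdeal

lemma subset_FS (B : Set ℕ) : B ⊆ FS B :=
  fun n hn => ⟨{n}, by simpa using hn, Finset.singleton_nonempty n, Finset.sum_singleton _ _⟩

lemma isIP_iff {A : Set ℕ} : IsIP A ↔ ∃ B : Set ℕ, B.Infinite ∧ FS B ⊆ A :=
  ⟨fun ⟨B, hB, _, hBA⟩ => ⟨B, hB, hBA⟩, fun ⟨B, hB, hBA⟩ => ⟨B, hB, (subset_FS B).trans hBA, hBA⟩⟩

lemma FS_subset_iff {A B : Set ℕ} :
    FS B ⊆ A ↔ ∀ F : Finset ℕ, (∀ i ∈ F, i ∈ B) → F.Nonempty → ∑ i ∈ F, i ∈ A :=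
  ⟨fun h F hFB hF => h ⟨F, hFB, hF, rfl⟩, fun h _ ⟨F, hFB, hF, hn⟩ => hn ▸ h F hFB hF⟩

lemma not_isIP_empty : ¬ IsIP ∅ :=
  fun ⟨_, hB, hBA, _⟩ => hB (Set.finite_empty.subset hBA)

lemma compl_hindmanIdeal_eq_image_fst :
    hindmanIdealᶜ = Prod.fst '' {p : (ℕ → Bool) × (ℕ → Bool) |
      {n | p.2 n = true}.Infinite ∧ FS {n | p.2 n = true} ⊆ {n | p.1 n = true}} := by
  classical
  ext x
  simp only [hindmanIdeal, mem_compl_iff, mem_ofPred_eq, not_not, isIP_iff, mem_image,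
    Prod.exists, exists_and_right, exists_eq_right]
  constructor
  · rintro ⟨B, hB, hBx⟩
    exact ⟨fun n => decide (n ∈ B), by simpa using hB, by simpa using hBx⟩
  · rintro ⟨c, hc⟩
    exact ⟨_, hc⟩

theorem analyticSet_compl_hindmanIdeal : AnalyticSet hindmanIdealᶜ := by
  rw [compl_hindmanIdeal_eq_image_fst]
  refine MeasurableSet.analyticSet_image (measurableSet_setOfPred.2 ?_) measurable_fst
  simp only [FS_subset_iff, ← Nat.frequently_atTop_iff_infinite, frequently_atTop, mem_ofPred_eq]
  fun_prop

lemma testBit_add_of_lt_of_dvd {a b m : ℕ} (ha : a < 2 ^ m) (hb : 2 ^ m ∣ b) (p : ℕ) :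
    (a + b).testBit p = (a.testBit p || b.testBit p) := by
  obtain ⟨c, rfl⟩ := hb
  rw [Nat.add_comm, Nat.two_pow_add_eq_or_of_lt ha, Nat.testBit_or, Bool.or_comm]

lemma le_of_testBit_of_two_pow_dvd {n m p : ℕ} (hn : 2 ^ m ∣ n) (hp : n.testBit p) : m ≤ p := by
  obtain ⟨c, rfl⟩ := hn
  rw [Nat.testBit_two_pow_mul] at hp
  simp only [Bool.and_eq_true, decide_eq_true_eq] at hp
  exact hp.1

lemma lt_of_testBit {n p : ℕ} (hp : n.testBit p) : p < n :=
  p.lt_two_pow_self.trans_le (Nat.ge_two_pow_of_testBit hp)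

lemma testBit_sum_two_pow {s : Finset ℕ} {p : ℕ} : (∑ i ∈ s, 2 ^ i).testBit p ↔ p ∈ s := by
  rw [← Nat.mem_bitIndices, ← List.mem_toFinset, Finset.toFinset_bitIndices_sum_two_pow]

lemma mem_of_testBit_of_mem_FS_image_two_pow {E : Set ℕ} {n p : ℕ}
    (hn : n ∈ FS ((2 ^ ·) '' E)) (hp : n.testBit p) : p ∈ E := by
  classical
  obtain ⟨F, hFE, -, rfl⟩ := hn
  obtain ⟨s, hsE, rfl⟩ := Finset.subset_set_image_iff.1 hFE
  rw [Finset.sum_image fun a _ b _ h => Nat.pow_right_injective le_rfl h] at hp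
  exact hsE (testBit_sum_two_pow.1 hp)

lemma exists_finset_two_pow_dvd_sum {B : Set ℕ} (hB : B.Infinite) (U : Finset ℕ) (M : ℕ) :
    ∃ F : Finset ℕ, ↑F ⊆ B ∧ Disjoint U F ∧ 0 < ∑ n ∈ F, n ∧ 2 ^ M ∣ ∑ n ∈ F, n := by
  set B' := B \ insert 0 ↑U
  have hB' : B'.Infinite := hB.sdiff (U.finite_toSet.insert 0)
  obtain ⟨r, hr⟩ : ∃ r, (B' ∩ {n | n % 2 ^ M = r}).Infinite := by
    by_contra! h
    refine hB' (((Finset.range (2 ^ M)).finite_toSet.biUnion fun r _ => h r).subset ?_)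
    exact fun n hn => mem_biUnion (Finset.mem_range.2 (Nat.mod_lt _ (by positivity))) ⟨hn, rfl⟩
  -- `2 ^ M` numbers with the same residue modulo `2 ^ M` add up to a multiple of `2 ^ M`.
  obtain ⟨F, hFr, hcard⟩ := hr.exists_subset_card_eq (2 ^ M)
  have hFB' : ∀ n ∈ F, n ∈ B ∧ n ≠ 0 ∧ n ∉ U := fun n hn => by
    simpa [B', not_or] using (hFr hn).1
  refine ⟨F, fun n hn => (hFB' n hn).1, Finset.disjoint_right.2 fun n hn => (hFB' n hn).2.2,
    Finset.sum_pos (fun n hn => Nat.pos_of_ne_zero (hFB' n hn).2.1) ?_, ?_⟩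
  · exact Finset.card_pos.1 (hcard ▸ Nat.two_pow_pos M)
  · rw [Nat.dvd_iff_mod_eq_zero, Finset.sum_nat_mod, Finset.sum_congr rfl fun n hn => (hFr hn).2,
      Finset.sum_const, hcard, smul_eq_mul, Nat.mul_mod_right]

lemma exists_seq_finset_two_pow_dvd_sum {B : Set ℕ} (hB : B.Infinite) :
    ∃ F : ℕ → Finset ℕ, (∀ i, ↑(F i) ⊆ B ∧ 0 < ∑ n ∈ F i, n) ∧
      ∀ i j, i < j → Disjoint (F i) (F j) ∧ 2 ^ (∑ n ∈ F i, n) ∣ ∑ n ∈ F j, n := by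
  choose next hnextB hnextU hnextpos hnextdvd using exists_finset_two_pow_dvd_sum hB
  -- `U j` is the union of the blocks chosen before step `j`.
  let U : ℕ → Finset ℕ := fun j => Nat.rec ∅ (fun _ U => U ∪ next U (∑ n ∈ U, n)) j
  let F : ℕ → Finset ℕ := fun j => next (U j) (∑ n ∈ U j, n)
  have hU : Monotone U := monotone_nat_of_le_succ fun _ => Finset.subset_union_left
  have hFU : ∀ i j, i < j → F i ⊆ U j := fun i j hij =>
    (Finset.subset_union_right : F i ⊆ U (i + 1)).trans (hU hij)
  refine ⟨F, fun i => ⟨hnextB _ _, hnextpos _ _⟩, fun i j hij =>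
    ⟨(hnextU _ _).mono_left (hFU i j hij), ?_⟩⟩
  exact (pow_dvd_pow 2 (Finset.sum_le_sum_of_subset (hFU i j hij))).trans (hnextdvd _ _)

lemma exists_seq_mem_FS_add_mem_FS {B : Set ℕ} (hB : B.Infinite) :
    ∃ y : ℕ → ℕ, (∀ i, y i ∈ FS B ∧ y i ≠ 0) ∧
      ∀ i j, i < j → y i + y j ∈ FS B ∧ 2 ^ y i ∣ y j := by
  obtain ⟨F, hF, hFF⟩ := exists_seq_finset_two_pow_dvd_sum hB
  refine ⟨fun i => ∑ n ∈ F i, n, fun i => ⟨⟨F i, (hF i).1, ?_, rfl⟩, (hF i).2.ne'⟩,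
    fun i j hij => ⟨⟨F i ∪ F j, ?_, ?_, Finset.sum_union (hFF i j hij).1⟩, (hFF i j hij).2⟩⟩
  · exact Finset.nonempty_of_sum_ne_zero (hF i).2.ne'
  · rw [Finset.coe_union]
    exact union_subset (hF i).1 (hF j).1
  · exact (Finset.nonempty_of_sum_ne_zero (hF i).2.ne').mono Finset.subset_union_left

section InitSeg

variable {α : Type*}

def initSeg (x : ℕ → α) (k : ℕ) : List α := (List.range k).map x

@[simp]
lemma length_initSeg (x : ℕ → α) (k : ℕ) : (initSeg x k).length = k := by
  simp [initSeg]

@[simp]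
lemma getElem_initSeg (x : ℕ → α) {k i : ℕ} (hi : i < (initSeg x k).length) :
    (initSeg x k)[i] = x i := by
  simp [initSeg]

lemma initSeg_eq_initSeg_iff {x v : ℕ → α} {k : ℕ} :
    initSeg v k = initSeg x k ↔ ∀ i < k, v i = x i := by
  simp [initSeg, List.map_inj_left]

lemma take_initSeg (x : ℕ → α) {j k : ℕ} (h : j ≤ k) : (initSeg x k).take j = initSeg x j := by
  rw [initSeg, ← List.map_take, List.take_range, min_eq_left h, initSeg]

lemma initSeg_prefix_initSeg (x : ℕ → α) {j k : ℕ} (h : j ≤ k) : initSeg x j <+: initSeg x k :=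
  take_initSeg x h ▸ List.take_prefix _ _

lemma initSeg_injective (x : ℕ → α) : Injective (initSeg x) := fun j k h => by
  simpa using congrArg List.length h

lemma isChain_range_initSeg (x : ℕ → α) : IsChain (· <+: ·) (range (initSeg x)) := by
  rintro _ ⟨j, rfl⟩ _ ⟨k, rfl⟩ -
  rcases le_total j k with h | h
  exacts [Or.inl (initSeg_prefix_initSeg x h), Or.inr (initSeg_prefix_initSeg x h)]

lemma exists_initSeg_prefix_of_isChain {S : Set (List α)} (hS : S.Infinite)
    (hc : IsChain (· <+: ·) S) : ∃ x : ℕ → α, ∀ k, ∃ l ∈ S, initSeg x k <+: l := by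
  have hlen : ∀ k, ∃ l ∈ S, k < l.length := by
    have : InjOn List.length S := fun l hl m hm h =>
      (hc.total hl hm).elim (·.eq_of_length h) fun hml => (hml.eq_of_length h.symm).symm
    intro k
    obtain ⟨_, ⟨l, hl, rfl⟩, hk⟩ := (hS.image this).exists_gt k
    exact ⟨l, hl, hk⟩
  choose L hLS hL using hlen
  refine ⟨fun n => (L n)[n]'(hL n), fun k => ⟨L k, hLS k, ?_⟩⟩
  rw [List.prefix_iff_eq_take]
  refine List.ext_getElem (by simp [(hL k).le]) fun n hn _ => ?_
  simp only [getElem_initSeg, List.getElem_take]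
  rcases hc.total (hLS n) (hLS k) with h | h
  · exact h.getElem (hL n)
  · exact (h.getElem _).symm

end InitSeg

section ChainCodes

variable {α : Type*} [Denumerable α]

def codedLists (n : ℕ) : Set (List α) := ofNat (List α) '' {p | n.testBit p}

def chainCodes (T : Set (List α)) : Set ℕ :=
  {n | codedLists n ⊆ T ∧ IsChain (· <+: ·) (codedLists (α := α) n)}

lemma isIP_chainCodes_of_forall_initSeg_mem {T : Set (List α)} {x : ℕ → α}
    (hx : ∀ k, initSeg x k ∈ T) : IsIP (chainCodes T) := by
  have hinj : Injective fun k => 2 ^ encode (initSeg x k) :=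
    (Nat.pow_right_injective le_rfl).comp (encode_injective.comp (initSeg_injective x))
  refine isIP_iff.2 ⟨(2 ^ ·) '' range fun k => encode (initSeg x k), ?_, fun n hn => ?_⟩
  · rw [← range_comp]
    exact infinite_range_of_injective hinj
  · have hsub : codedLists n ⊆ range (initSeg x) := by
      rintro _ ⟨p, hp, rfl⟩
      obtain ⟨k, rfl⟩ := mem_of_testBit_of_mem_FS_image_two_pow hn hp
      exact ⟨k, (ofNat_encode _).symm⟩
    exact ⟨hsub.trans (range_subset_iff.2 hx), (isChain_range_initSeg x).mono hsub⟩

lemma exists_forall_initSeg_mem_of_isIP_chainCodes {T : Set (List α)}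
    (hT : ∀ l ∈ T, ∀ m, m <+: l → m ∈ T) (h : IsIP (chainCodes T)) :
    ∃ x : ℕ → α, ∀ k, initSeg x k ∈ T := by
  obtain ⟨B, hB, -, hBT⟩ := h
  obtain ⟨y, hy, hyy⟩ := exists_seq_mem_FS_add_mem_FS hB
  choose p hp using fun i => Nat.exists_testBit_of_ne_zero (hy i).2
  have hp_mono : StrictMono p := fun i j hij =>
    (lt_of_testBit (hp i)).trans_le (le_of_testBit_of_two_pow_dvd (hyy i j hij).2 (hp j))
  have hpair : ∀ i j, i < j →
      ofNat (List α) (p i) <+: ofNat _ (p j) ∨ ofNat (List α) (p j) <+: ofNat _ (p i) := by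
    intro i j hij
    have hbit := testBit_add_of_lt_of_dvd (y i).lt_two_pow_self (hyy i j hij).2
    refine (hBT (hyy i j hij).1).2.total ⟨p i, ?_, rfl⟩ ⟨p j, ?_, rfl⟩
    · simp [hbit, hp i]
    · simp [hbit, hp j]
  have hinj : Injective fun i => ofNat (List α) (p i) :=
    (LeftInverse.injective encode_ofNat).comp hp_mono.injective
  have hchain : IsChain (· <+: ·) (range fun i => ofNat (List α) (p i)) := by
    rintro _ ⟨i, rfl⟩ _ ⟨j, rfl⟩ hne
    rcases lt_or_gt_of_ne (ne_of_apply_ne (fun i => ofNat (List α) (p i)) hne) with hij | hij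
    exacts [hpair i j hij, (hpair j i hij).symm]
  obtain ⟨x, hx⟩ := exists_initSeg_prefix_of_isChain (infinite_range_of_injective hinj) hchain
  refine ⟨x, fun k => ?_⟩
  obtain ⟨_, ⟨i, rfl⟩, hxi⟩ := hx k
  exact hT _ ((hBT (hy i).1).1 ⟨p i, hp i, rfl⟩) _ hxi

theorem isIP_chainCodes_iff {T : Set (List α)} (hT : ∀ l ∈ T, ∀ m, m <+: l → m ∈ T) :
    IsIP (chainCodes T) ↔ ∃ x : ℕ → α, ∀ k, initSeg x k ∈ T :=
  ⟨exists_forall_initSeg_mem_of_isIP_chainCodes hT,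
    fun ⟨_, hx⟩ => isIP_chainCodes_of_forall_initSeg_mem hx⟩

lemma measurableSet_setOf_mem_chainCodes {Y : Type*} [MeasurableSpace Y] {T : Y → Set (List α)}
    (hT : ∀ l, MeasurableSet {y | l ∈ T y}) (n : ℕ) :
    MeasurableSet {y | n ∈ chainCodes (T y)} := by
  have : {y | n ∈ chainCodes (T y)} =
      (⋂ l ∈ codedLists n, {y | l ∈ T y}) ∩ {_y | IsChain (· <+: ·) (codedLists (α := α) n)} := by
    ext
    simp [chainCodes, subset_def]
  rw [this]
  exact (MeasurableSet.biInter (to_countable _) fun l _ => hT l).inter (MeasurableSet.const _)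

end ChainCodes

section ApproxTree

variable {α Y : Type*} [MetricSpace Y] {g : (ℕ → α) → Y} {y : Y}

def cylinder (l : List α) : Set (ℕ → α) := {v | initSeg v l.length = l}

lemma cylinder_anti {l m : List α} (h : m <+: l) : cylinder l ⊆ cylinder m := fun v hv =>
  calc initSeg v m.length = (initSeg v l.length).take m.length := (take_initSeg v h.length_le).symm
    _ = m := by rw [hv, ← List.prefix_iff_eq_take.1 h]

lemma tendsto_of_mem_cylinder_initSeg [TopologicalSpace α] {v : ℕ → ℕ → α} {x : ℕ → α}
    (hv : ∀ k, v k ∈ cylinder (initSeg x k)) : Tendsto v atTop (𝓝 x) := by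
  refine tendsto_pi_nhds.2 fun n => tendsto_const_nhds.congr' ?_
  filter_upwards [eventually_gt_atTop n] with k hk
  have hvk : initSeg (v k) k = initSeg x k := by simpa [cylinder] using hv k
  exact (initSeg_eq_initSeg_iff.1 hvk n hk).symm

variable (g) in
def approxTree (y : Y) : Set (List α) :=
  {l | ∃ v ∈ cylinder l, dist (g v) y < (1 / 2 : ℝ) ^ l.length}

lemma mem_approxTree_of_prefix {l m : List α} (hl : l ∈ approxTree g y) (h : m <+: l) :
    m ∈ approxTree g y := by
  obtain ⟨v, hv, hvy⟩ := hl
  exact ⟨v, cylinder_anti h hv,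
    hvy.trans_le (pow_le_pow_of_le_one (by norm_num) (by norm_num) h.length_le)⟩

lemma initSeg_mem_approxTree (x : ℕ → α) (k : ℕ) : initSeg x k ∈ approxTree g (g x) :=
  ⟨x, by simp [cylinder], by simp⟩

lemma eq_of_forall_initSeg_mem_approxTree [TopologicalSpace α] (hg : Continuous g) {x : ℕ → α}
    (hx : ∀ k, initSeg x k ∈ approxTree g y) : g x = y := by
  choose v hv hvy using hx
  have hgx : Tendsto (g ∘ v) atTop (𝓝 (g x)) :=
    (hg.tendsto x).comp (tendsto_of_mem_cylinder_initSeg hv)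
  have hgy : Tendsto (g ∘ v) atTop (𝓝 y) := by
    refine tendsto_iff_dist_tendsto_zero.2 (squeeze_zero (fun _ => dist_nonneg)
      (fun k => (hvy k).le.trans_eq (by rw [length_initSeg])) ?_)
    exact tendsto_pow_atTop_nhds_zero_of_lt_one (by norm_num) (by norm_num)
  exact tendsto_nhds_unique hgx hgy

theorem exists_forall_initSeg_mem_approxTree_iff [TopologicalSpace α] (hg : Continuous g) :
    (∃ x : ℕ → α, ∀ k, initSeg x k ∈ approxTree g y) ↔ y ∈ range g :=
  ⟨fun ⟨x, hx⟩ => ⟨x, eq_of_forall_initSeg_mem_approxTree hg hx⟩,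
    by rintro ⟨x, rfl⟩; exact ⟨x, initSeg_mem_approxTree x⟩⟩

variable (g) in
lemma isOpen_setOf_mem_approxTree (l : List α) : IsOpen {y | l ∈ approxTree g y} := by
  have : {y | l ∈ approxTree g y} = ⋃ v ∈ cylinder l, ball (g v) ((1 / 2 : ℝ) ^ l.length) := by
    ext
    simp only [approxTree, mem_ofPred_eq, mem_iUnion, mem_ball', exists_prop]
  rw [this]
  exact isOpen_biUnion fun _ _ => isOpen_ball

end ApproxTree

theorem exists_measurable_preimage_compl_hindmanIdeal {Y : Type*} [TopologicalSpace Y]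
    [PolishSpace Y] [MeasurableSpace Y] [BorelSpace Y] {S : Set Y} (hS : AnalyticSet S) :
    ∃ f : Y → ℕ → Bool, Measurable f ∧ f ⁻¹' hindmanIdealᶜ = S := by
  rw [AnalyticSet_def] at hS
  rcases hS with rfl | ⟨g, hg, rfl⟩
  · exact ⟨fun _ _ => false, measurable_const, by simp [hindmanIdeal, not_isIP_empty]⟩
  classical
  let := TopologicalSpace.metrizableSpaceMetric Y
  refine ⟨fun y n => decide (n ∈ chainCodes (approxTree g y)), ?_, ?_⟩
  · refine measurable_pi_lambda _ fun n => measurable_to_bool ?_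
    simp only [preimage, mem_singleton_iff, decide_eq_true_eq]
    exact measurableSet_setOf_mem_chainCodes
      (fun l => (isOpen_setOf_mem_approxTree g l).measurableSet) n
  · ext y
    simp [hindmanIdeal, isIP_chainCodes_iff fun l hl m => mem_approxTree_of_prefix hl,
      exists_forall_initSeg_mem_approxTree_iff hg]

end HindmanIdeal

/-- The Hindman ideal is `Π¹₁`-complete: its complement is analytic, and every
coanalytic subset of every Polish space Borel-reduces to it. -/
theorem hindmanIdeal_coanalytic_complete :
    AnalyticSet hindmanIdealᶜ ∧
      ∀ (Y : Type) [TopologicalSpace Y] [PolishSpace Y]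
        [MeasurableSpace Y] [BorelSpace Y] (B : Set Y),
        AnalyticSet Bᶜ →
          ∃ f : Y → (ℕ → Bool), Measurable f ∧ f ⁻¹' hindmanIdeal = B := by
  refine ⟨HindmanIdeal.analyticSet_compl_hindmanIdeal, fun Y _ _ _ _ B hB => ?_⟩
  obtain ⟨f, hf, hfB⟩ := HindmanIdeal.exists_measurable_preimage_compl_hindmanIdeal hB
  exact ⟨f, hf, compl_injective (by rw [← preimage_compl, hfB])⟩
end

section
/- For every k ≥ 2, the family H_k of all non-IP_k-sets is an ideal on ω: it is closed under taking subsets (if A ∈ H_k and B ⊆ A then B ∈ H_k) and under finite unions (if A, B ∈ H_k then A ∪ B ∈ H_k). -/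
/-- `FSk k B` is the set of all sums of `k`-element subsets of `B`. -/
def FSk (k : ℕ) (B : Set ℕ) : Set ℕ :=
  {n | ∃ F : Finset ℕ, ↑F ⊆ B ∧ F.card = k ∧ ∑ i ∈ F, i = n}

/-- `A ⊆ ω` is an IP_k-set if there is an infinite `B ⊆ ω` with `FSk k B ⊆ A`. -/
def IsIPk (k : ℕ) (A : Set ℕ) : Prop :=
  ∃ B : Set ℕ, B.Infinite ∧ FSk k B ⊆ A

/-!
By the infinite Ramsey theorem, colouring the `k`-element subsets of an infinite witness `C` for
`A ∪ B` by whether their sum lies in `A` yields an infinite `T ⊆ C` all of whose `k`-subsets have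
the same colour; then `T` witnesses that `A` or `B` is an IP_k-set.
-/

open Set

section Ramsey

variable {κ : Type*}

def IsMonochromatic (c : Finset ℕ → κ) (k : ℕ) (T : Set ℕ) (v : κ) : Prop :=
  ∀ F : Finset ℕ, ↑F ⊆ T → F.card = k → c F = v

theorem isMonochromatic_image_of_pivots (c : Finset ℕ → κ) (k : ℕ) {G : ℕ → Set ℕ}
    (hG : Antitone G) {a : ℕ → ℕ} (ha_mono : StrictMono a) (ha : ∀ n, a n ∈ G n) {b : ℕ → κ}
    (hb : ∀ n, IsMonochromatic (fun F => c (insert (a n) F)) k (G (n + 1)) (b n)) (v : κ) :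
    IsMonochromatic c (k + 1) (a '' (b ⁻¹' {v})) v := by
  intro F hF hcard
  have hF_ne : F.Nonempty := Finset.card_pos.mp (by omega)
  set m := F.min' hF_ne
  have hmF : m ∈ F := F.min'_mem hF_ne
  obtain ⟨i, hi, him⟩ := hF hmF
  have h_rest : ↑(F.erase m) ⊆ G (i + 1) := by
    intro y hy
    obtain ⟨hym, hyF⟩ := Finset.mem_erase.mp hy
    obtain ⟨j, -, rfl⟩ := hF hyF
    have hij : i < j := ha_mono.lt_iff_lt.mp (him ▸ lt_of_le_of_ne (F.min'_le _ hyF) (Ne.symm hym))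
    exact hG (Nat.succ_le_of_lt hij) (ha j)
  have h_card : (F.erase m).card = k := by
    rw [Finset.card_erase_of_mem hmF, hcard, Nat.add_sub_cancel]
  have h := hb i (F.erase m) (him ▸ h_rest) h_card
  dsimp only at h
  rwa [him, Finset.insert_erase hmF, hi] at h

theorem Set.Infinite.exists_isMonochromatic [Finite κ] (c : Finset ℕ → κ) (k : ℕ) {S : Set ℕ}
    (hS : S.Infinite) : ∃ T ⊆ S, T.Infinite ∧ ∃ v, IsMonochromatic c k T v := by
  induction k generalizing c S with
  | zero =>
    refine ⟨S, subset_rfl, hS, c ∅, fun F _ hF => ?_⟩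
    rw [Finset.card_eq_zero.mp hF]
  | succ k ih =>
    have pivot : ∀ X : Set ℕ, X.Infinite → ∃ a ∈ X, ∃ T ⊆ X ∩ Ioi a, T.Infinite ∧
        ∃ b, IsMonochromatic (fun F => c (insert a F)) k T b := by
      intro X hX
      obtain ⟨a, haX⟩ := hX.nonempty
      have hX_gt : (X ∩ Ioi a).Infinite := by
        simpa only [sdiff_eq, compl_Iic] using hX.sdiff (finite_Iic a)
      exact ⟨a, haX, ih (fun F => c (insert a F)) hX_gt⟩
    have : Nonempty κ := ⟨c ∅⟩
    choose! pa hpa pT hpT hpT_inf pb hpb using pivot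
    set G : ℕ → Set ℕ := fun n => pT^[n] S
    have hG_succ (n : ℕ) : G (n + 1) = pT (G n) := Function.iterate_succ_apply' ..
    have hG_inf (n : ℕ) : (G n).Infinite := by
      induction n with
      | zero => exact hS
      | succ n ihn => exact hG_succ n ▸ hpT_inf _ ihn
    have hG_sub (n : ℕ) : G (n + 1) ⊆ G n ∩ Ioi (pa (G n)) := hG_succ n ▸ hpT _ (hG_inf n)
    have hG_anti : Antitone G := antitone_nat_of_succ_le fun n => (hG_sub n).trans inter_subset_left
    have ha (n : ℕ) : pa (G n) ∈ G n := hpa _ (hG_inf n)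
    have ha_mono : StrictMono fun n => pa (G n) :=
      strictMono_nat_of_lt_succ fun n => ((hG_sub n) (ha (n + 1))).2
    obtain ⟨v, hv⟩ := Finite.exists_infinite_fiber fun n => pb (G n)
    refine ⟨_, ?_, (infinite_coe_iff.mp hv).image ha_mono.injective.injOn, v,
      isMonochromatic_image_of_pivots c k hG_anti ha_mono ha
        (fun n => hG_succ n ▸ hpb _ (hG_inf n)) v⟩
    rintro _ ⟨n, -, rfl⟩
    exact hG_anti (Nat.zero_le n) (ha n)

end Ramsey

theorem IsIPk.mono {k : ℕ} {A A' : Set ℕ} (h : A ⊆ A') : IsIPk k A → IsIPk k A' :=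
  fun ⟨B, hB, hFS⟩ => ⟨B, hB, hFS.trans h⟩

theorem IsIPk.of_union {k : ℕ} {A B : Set ℕ} : IsIPk k (A ∪ B) → IsIPk k A ∨ IsIPk k B := by
  rintro ⟨C, hC, hFS⟩
  obtain ⟨T, hTC, hT, v, hv⟩ := hC.exists_isMonochromatic (fun F => ∑ i ∈ F, i ∈ A) k
  by_cases hv_true : v
  · exact .inl ⟨T, hT, fun _ ⟨F, hFT, hF, hsum⟩ => hsum ▸ (hv F hFT hF).mpr hv_true⟩
  · refine .inr ⟨T, hT, fun _ ⟨F, hFT, hF, hsum⟩ => ?_⟩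
    have h_notA : ∑ i ∈ F, i ∉ A := fun h => hv_true ((hv F hFT hF).mp h)
    exact hsum ▸ (hFS ⟨F, hFT.trans hTC, hF, rfl⟩).resolve_left h_notA

theorem Hk_isIdeal_general (k : ℕ) :
    (∀ A B : Set ℕ, ¬ IsIPk k A → B ⊆ A → ¬ IsIPk k B) ∧
    (∀ A B : Set ℕ, ¬ IsIPk k A → ¬ IsIPk k B → ¬ IsIPk k (A ∪ B)) :=
  ⟨fun _ _ hA hBA hB => hA (hB.mono hBA),
   fun _ _ hA hB hAB => hAB.of_union.elim hA hB⟩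

/-- For every `k ≥ 2`, the family `H_k` of non-IP_k-sets is an ideal on `ω`:
it is closed under taking subsets and under finite unions. -/
theorem Hk_isIdeal (k : ℕ) (hk : 2 ≤ k) :
    (∀ A B : Set ℕ, ¬ IsIPk k A → B ⊆ A → ¬ IsIPk k B) ∧
    (∀ A B : Set ℕ, ¬ IsIPk k A → ¬ IsIPk k B → ¬ IsIPk k (A ∪ B)) :=
  Hk_isIdeal_general k
end

section
/- For natural numbers n, m ≥ 2: n divides m if and only if H_n ⊆ H_m. -/
/-- The family `H_k` of all non-IP_k-sets. -/
def Hk (k : ℕ) : Set (Set ℕ) := {A | ¬ IsIPk k A}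

lemma isIPk_of_dvd {n m : ℕ} (hn : 0 < n) (hq : n ∣ m) (hm : 0 < m) {A : Set ℕ}
    (h : IsIPk m A) : IsIPk n A := by
  classical
  obtain ⟨q, rfl⟩ := hq
  have hq0 : 0 < q := Nat.pos_of_ne_zero (by rintro rfl; simp at hm)
  obtain ⟨B, hB, hFS⟩ := h
  have hB' : {x | x ∈ B}.Infinite := hB
  set g : ℕ → ℕ := Nat.nth (· ∈ B) with hg
  have hgmono : StrictMono g := Nat.nth_strictMono hB'
  have hgmem : ∀ i, g i ∈ B := fun i => Nat.nth_mem_of_infinite hB' i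
  have key : ∀ a b ia ib : ℕ, ia < q → ib < q → a * q + ia = b * q + ib → a = b := by
    intro a b ia ib hia hib hab
    rcases Nat.lt_trichotomy a b with h | h | h
    · have h1 : a + 1 ≤ b := h
      nlinarith
    · exact h
    · have h1 : b + 1 ≤ a := h
      nlinarith
  set S : ℕ → Finset ℕ := fun j => (Finset.range q).image (fun i => g (j * q + i)) with hS
  set h : ℕ → ℕ := fun j => ∑ i ∈ Finset.range q, g (j * q + i) with hh
  have hSsum : ∀ j, ∑ x ∈ S j, x = h j := by
    intro j
    rw [hS, hh]
    exact Finset.sum_image (fun a _ b _ hab =>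
      Nat.add_left_cancel (hgmono.injective hab))
  have hScard : ∀ j, (S j).card = q := by
    intro j
    rw [hS]
    rw [Finset.card_image_of_injOn (fun a _ b _ hab =>
      Nat.add_left_cancel (hgmono.injective hab))]
    simp
  have hSdisj : ∀ j j', j ≠ j' → Disjoint (S j) (S j') := by
    intro j j' hne
    rw [Finset.disjoint_left]
    intro a haj haj'
    simp only [hS, Finset.mem_image, Finset.mem_range] at haj haj'
    obtain ⟨i, hi, rfl⟩ := haj
    obtain ⟨i', hi', he⟩ := haj'
    exact hne (key j' j i' i hi' hi (hgmono.injective he)).symm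
  have hhmono : StrictMono h := by
    intro j j' hjj
    apply Finset.sum_lt_sum_of_nonempty (Finset.nonempty_range_iff.mpr (by omega))
    intro i _
    exact hgmono (by nlinarith)
  refine ⟨Set.range h, Set.infinite_range_of_injective hhmono.injective, ?_⟩
  rintro s ⟨F, hFsub, hFcard, rfl⟩
  set J : Finset ℕ := F.preimage h hhmono.injective.injOn with hJ
  have hJim : J.image h = F := by
    rw [hJ, Finset.image_preimage]
    exact Finset.filter_true_of_mem fun x hx => hFsub hx
  have hJcard : J.card = n := by
    rw [← hFcard, ← hJim, Finset.card_image_of_injective _ hhmono.injective]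
  set G : Finset ℕ := J.biUnion S with hG
  apply hFS
  refine ⟨G, ?_, ?_, ?_⟩
  · intro x hx
    simp only [hG, Finset.coe_biUnion, Set.mem_iUnion] at hx
    obtain ⟨j, _, hj⟩ := hx
    simp only [hS, Finset.coe_image, Set.mem_image] at hj
    obtain ⟨i, _, rfl⟩ := hj
    exact hgmem _
  · rw [hG, Finset.card_biUnion (fun j _ j' _ hne => hSdisj j j' hne)]
    simp only [hScard, Finset.sum_const, smul_eq_mul]
    rw [hJcard]
  · rw [hG, Finset.sum_biUnion (fun j _ j' _ hne => hSdisj j j' hne)]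
    simp only [hSsum]
    rw [← hJim, Finset.sum_image (fun a _ b _ hab => hhmono.injective hab)]

lemma not_dvd_example {n m : ℕ} (hn : 2 ≤ n) (hm : 2 ≤ m) (hnd : ¬ n ∣ m) :
    IsIPk m {x | x % n = m % n} ∧ ¬ IsIPk n {x | x % n = m % n} := by
  have hn0 : 0 < n := by omega
  constructor
  · refine ⟨{x | x % n = 1}, ?_, ?_⟩
    · apply Set.infinite_of_injective_forall_mem (f := fun k : ℕ => n * k + 1)
      · intro a b hab
        simp only [add_left_inj] at hab
        exact Nat.eq_of_mul_eq_mul_left hn0 hab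
      · intro k
        simp only [Set.mem_setOf_eq]
        rw [Nat.mul_add_mod]
        exact Nat.mod_eq_of_lt (by omega)
    · rintro s ⟨F, hFsub, hFcard, rfl⟩
      have h1 : (∑ i ∈ F, i) % n = (∑ i ∈ F, i % n) % n := Finset.sum_nat_mod F n _
      simp only [Set.mem_setOf_eq]
      rw [h1]
      have h2 : ∑ i ∈ F, i % n = F.card := by
        rw [Finset.sum_congr rfl (fun x hx => hFsub hx)]
        simp
      rw [h2, hFcard]
  · rintro ⟨B, hB, hFS⟩
    haveI := hB.to_subtype
    set f : B → Fin n := fun x => ⟨(x : ℕ) % n, Nat.mod_lt _ hn0⟩ with hf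
    obtain ⟨r, hr⟩ := Finite.exists_infinite_fiber f
    have hC : (Subtype.val '' (f ⁻¹' {r}) : Set ℕ).Infinite :=
      (Set.infinite_coe_iff.mp hr).image Subtype.val_injective.injOn
    obtain ⟨F, hFsub, hFcard⟩ := hC.exists_subset_card_eq n
    have hFB : ↑F ⊆ B := by
      intro x hx
      obtain ⟨y, _, rfl⟩ := hFsub hx
      exact y.2
    have hmem : ∑ i ∈ F, i ∈ {x | x % n = m % n} := hFS ⟨F, hFB, hFcard, rfl⟩
    have hmod : (∑ i ∈ F, i) % n = 0 := by
      rw [Finset.sum_nat_mod]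
      have hcongr : ∀ x ∈ F, x % n = (r : ℕ) := by
        intro x hx
        obtain ⟨y, hy, rfl⟩ := hFsub hx
        have hy' : f y = r := hy
        have := congrArg Fin.val hy'
        simpa [hf] using this
      rw [Finset.sum_congr rfl hcongr, Finset.sum_const, hFcard, smul_eq_mul,
        Nat.mul_mod_right]
    simp only [Set.mem_setOf_eq] at hmem
    rw [hmem] at hmod
    exact hnd (Nat.dvd_of_mod_eq_zero hmod)

/-- For `n, m ≥ 2`: `n` divides `m` if and only if `H_n ⊆ H_m`. -/
theorem Hn_subset_Hm_iff_dvd (n m : ℕ) (hn : 2 ≤ n) (hm : 2 ≤ m) :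
    n ∣ m ↔ Hk n ⊆ Hk m := by
  constructor
  · intro hd A hA hIPm
    exact hA (isIPk_of_dvd (by omega) hd (by omega) hIPm)
  · intro hsub
    by_contra hnd
    obtain ⟨hIPm, hIPn⟩ := not_dvd_example hn hm hnd
    exact hsub hIPn hIPm
end

section
/- For every k ≥ 2, H_k is a proper subideal of the Hindman ideal: H_k ⊆ H and H_k ≠ H. -/
/-- The Hindman ideal: the family of all non-IP-sets. -/
def HindmanH : Set (Set ℕ) := {A | ¬ IsIP A}

/-- Every element of `FSk k {(k+2)^m : m ∈ ℕ}` is congruent to `k` mod `k+1`. -/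
lemma FSk_pow_cast (k n : ℕ)
    (hn : n ∈ FSk k (Set.range fun m => (k + 2) ^ m)) :
    (n : ZMod (k + 1)) = (k : ZMod (k + 1)) := by
  obtain ⟨F, hF, hcard, rfl⟩ := hn
  have h1 : ∀ i ∈ F, ((i : ℕ) : ZMod (k + 1)) = 1 := by
    intro i hi
    obtain ⟨m, rfl⟩ := hF hi
    have hbase : ((k + 2 : ℕ) : ZMod (k + 1)) = 1 := by
      have h0 : ((k + 1 : ℕ) : ZMod (k + 1)) = 0 := ZMod.natCast_self _
      push_cast at h0 ⊢
      linear_combination h0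
    push_cast
    push_cast at hbase
    rw [hbase, one_pow]
  rw [Nat.cast_sum, Finset.sum_congr rfl h1, Finset.sum_const, hcard]
  simp

/-- For every `k ≥ 2`, `H_k` is a proper subideal of the Hindman ideal:
`H_k ⊆ H` and `H_k ≠ H`. -/
theorem Hk_proper_subideal (k : ℕ) (hk : 2 ≤ k) :
    Hk k ⊆ HindmanH ∧ Hk k ≠ HindmanH := by
  constructor
  · -- H_k ⊆ H
    intro A hA
    intro ⟨B, hBinf, _hBA, hFS⟩
    exact hA ⟨B, hBinf, fun n ⟨F, hF, hcard, hsum⟩ =>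
      hFS ⟨F, hF, Finset.card_pos.mp (hcard ▸ by omega), hsum⟩⟩
  · -- H_k ≠ H : the set A below is IP_k but not IP
    set A : Set ℕ := FSk k (Set.range fun m => (k + 2) ^ m) with hAdef
    have hIPk : IsIPk k A := by
      refine ⟨Set.range fun m => (k + 2) ^ m, ?_, subset_rfl⟩
      exact Set.infinite_range_of_injective
        (Nat.pow_right_injective (by omega))
    have hnotIP : ¬ IsIP A := by
      rintro ⟨B, hBinf, hBA, hFSA⟩
      obtain ⟨b, hb, b', hb', hne⟩ := hBinf.nontrivial
      have h1 : ((b : ℕ) : ZMod (k + 1)) = k := FSk_pow_cast k b (hBA hb)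
      have h2 : ((b' : ℕ) : ZMod (k + 1)) = k := FSk_pow_cast k b' (hBA hb')
      have hmem : b + b' ∈ A := by
        apply hFSA
        exact ⟨{b, b'}, by
          intro x hx
          simp only [Finset.coe_insert, Finset.coe_singleton, Set.mem_insert_iff,
            Set.mem_singleton_iff] at hx
          rcases hx with rfl | rfl
          · exact hb
          · exact hb', ⟨b, by simp⟩, Finset.sum_pair hne⟩
      have h3 : ((b + b' : ℕ) : ZMod (k + 1)) = k := FSk_pow_cast k _ hmem
      have hk0 : ((k : ℕ) : ZMod (k + 1)) = 0 := by
        push_cast at h3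
        rw [h1, h2] at h3
        linear_combination h3
      have hdvd : (k + 1) ∣ k := (ZMod.natCast_eq_zero_iff _ _).mp hk0
      have := Nat.le_of_dvd (by omega) hdvd
      omega
    intro heq
    have : A ∈ HindmanH := hnotIP
    rw [← heq] at this
    exact this hIPk
end

section
/- The family H_2 of all non-IP_2-sets, regarded as a subset of the Polish space P(ω) ≅ 2^ω, is Π¹₁-complete: its complement is analytic, and for every Polish space Y and every coanalytic set B ⊆ Y there is a Borel measurable function f : Y → P(ω) with f⁻¹(H_2) = B. -/
/-!
An analytic set is the range of a continuous `h : ℕ^ℕ → Y`, and `y ∈ range h` iff the set `T_y` of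
finite sequences whose cylinder meets `h ⁻¹' ball y 2^{-length}` contains an infinite strictly
increasing chain; membership of a fixed node in `T_y` is open in `y`. A set `T` of sequences is
coded by the numbers `weight s + weight t` over nested pairs `s ⊊ t` in `T`, where in base 5
`weight l` has a digit `1` exactly at the codes of the nonempty suffixes of `l`. A chain of `T`
yields an IP₂-set inside the code. Conversely, if `FS₂(B)` lies in the code, pick `b₀ < b₁ < ⋯`
in `B` growing by a factor 5: the leading base-5 digit of `b_j + b_k` (`j < k`) is the code of the
top `t` of its representation, so the tops for `b_i + b_k` and `b_j + b_k` coincide and the bottoms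
are nested, with the bottom for `b_j + b_k` independent of `k`. So `y ↦ code(T_y)` reduces `B`
to `H₂`.
-/

open MeasureTheory

/-- `FS₂ B = { a + b : a, b ∈ B, a ≠ b }`. -/
def FS2 (B : Set ℕ) : Set ℕ :=
  {n | ∃ a ∈ B, ∃ b ∈ B, a ≠ b ∧ a + b = n}

/-- `A ⊆ ω` is an IP₂-set if there is an infinite `B ⊆ ω` with `FS₂ B ⊆ A`. -/
def IsIP2 (A : Set ℕ) : Prop :=
  ∃ B : Set ℕ, B.Infinite ∧ FS2 B ⊆ A

/-- The ideal `H₂` of all non-IP₂-sets, viewed inside the Cantor space `2^ω ≅ P(ω)`. -/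
def H2 : Set (ℕ → Bool) :=
  {x | ¬ IsIP2 {n | x n = true}}

open Encodable

theorem isIP2_iff_exists_injective {A : Set ℕ} :
    IsIP2 A ↔ ∃ g : ℕ → ℕ, g.Injective ∧ ∀ i j, i ≠ j → g i + g j ∈ A := by
  constructor
  · rintro ⟨B, hB, hBA⟩
    let e := hB.natEmbedding
    refine ⟨fun n => e n, Subtype.coe_injective.comp e.injective, fun i j hij => hBA ?_⟩
    exact ⟨e i, (e i).2, e j, (e j).2, fun h => hij (e.injective (Subtype.coe_injective h)), rfl⟩
  · rintro ⟨g, hg, hgA⟩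
    refine ⟨Set.range g, Set.infinite_range_of_injective hg, ?_⟩
    rintro _ ⟨_, ⟨i, rfl⟩, _, ⟨j, rfl⟩, hij, rfl⟩
    exact hgA i j (ne_of_apply_ne g hij)

theorem IsIP2.exists_sparse_seq {A : Set ℕ} (hA : IsIP2 A) {c : ℕ} (hc : 0 < c) :
    ∃ b : ℕ → ℕ, ∀ i j, i < j → c * b i < b j ∧ b i + b j ∈ A := by
  obtain ⟨B, hB, hBA⟩ := hA
  choose f hfB hf using hB.exists_gt
  let b : ℕ → ℕ := fun j => (fun n => f (c * n))^[j] (f 0)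
  have hb_succ : ∀ j, b (j + 1) = f (c * b j) := fun j =>
    Function.iterate_succ_apply' _ _ _
  have hbB : ∀ j, b j ∈ B
    | 0 => hfB 0
    | j + 1 => hb_succ j ▸ hfB _
  have hb_lt : ∀ i j, i < j → c * b i < b j := by
    intro i j hij
    induction j, hij using Nat.le_induction with
    | base => exact hb_succ i ▸ hf _
    | succ j _ ih =>
      have := hb_succ j ▸ hf (c * b j)
      have := Nat.le_mul_of_pos_left (b j) hc
      omega
  refine ⟨b, fun i j hij => ⟨hb_lt i j hij, hBA ⟨b i, hbB i, b j, hbB j, ?_, rfl⟩⟩⟩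
  have := hb_lt i j hij
  have := Nat.le_mul_of_pos_left (b i) hc
  omega

theorem encode_lt_encode_cons (a : ℕ) (l : List ℕ) : encode l < encode (a :: l) := by
  rw [encode_list_cons]
  exact Nat.lt_succ_of_le (Nat.right_le_pair _ _)

def weight : List ℕ → ℕ
  | [] => 0
  | a :: l => 5 ^ encode (a :: l) + weight l

theorem pow_encode_le_weight {l : List ℕ} (hl : l ≠ []) : 5 ^ encode l ≤ weight l := by
  cases l with
  | nil => exact absurd rfl hl
  | cons a l => exact Nat.le_add_right _ _

theorem four_mul_weight_lt (l : List ℕ) : 4 * weight l < 5 ^ (encode l + 1) := by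
  induction l with
  | nil => simp [weight]
  | cons a l ih =>
    have : 5 ^ (encode l + 1) ≤ 5 ^ encode (a :: l) :=
      Nat.pow_le_pow_right (by norm_num) (encode_lt_encode_cons a l)
    rw [weight, pow_succ]
    omega

theorem weight_le_of_suffix {s t : List ℕ} (h : s <:+ t) : weight s ≤ weight t := by
  obtain ⟨u, rfl⟩ := h
  induction u with
  | nil => exact le_rfl
  | cons a u ih => exact ih.trans (Nat.le_add_left _ _)

theorem weight_add_pow_le_of_suffix {s t : List ℕ} (h : s <:+ t) (hne : s ≠ t) :
    weight s + 5 ^ encode t ≤ weight t := by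
  obtain ⟨u, rfl⟩ := h
  cases u with
  | nil => exact absurd rfl hne
  | cons a u =>
    have := weight_le_of_suffix (List.suffix_append u s)
    rw [List.cons_append, weight]
    omega

theorem weight_lt_of_suffix {s t : List ℕ} (h : s <:+ t) (hne : s ≠ t) : weight s < weight t :=
  (Nat.lt_add_of_pos_right (by positivity)).trans_le
    (weight_add_pow_le_of_suffix h hne)

theorem log_weight_sub_eq_encode {s t : List ℕ} (h : s <:+ t) (hne : s ≠ t) :
    Nat.log 5 (weight t - weight s) = encode t := by
  have := weight_add_pow_le_of_suffix h hne
  have := four_mul_weight_lt t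
  apply Nat.log_eq_of_pow_le_of_lt_pow <;> omega

theorem log_eq_encode_of_weight_add_eq {s t : List ℕ} (h : s <:+ t) (ht : t ≠ []) {x y z : ℕ}
    (hxz : x ≤ z) (hzy : 5 * z ≤ y) (hsum : weight s + weight t = x + y) :
    Nat.log 5 (z + y) = encode t := by
  have := pow_encode_le_weight ht
  have := weight_le_of_suffix h
  have := four_mul_weight_lt t
  apply Nat.log_eq_of_pow_le_of_lt_pow <;> omega

theorem ne_nil_of_suffix_of_ne {s t : List ℕ} (h : s <:+ t) (hne : s ≠ t) : t ≠ [] := by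
  rintro rfl
  exact hne (List.suffix_nil.mp h)

theorem suffix_of_weight_lt {s s' t : List ℕ} (hs : s <:+ t) (hs' : s' <:+ t)
    (hlt : weight s < weight s') : s <:+ s' ∧ s ≠ s' := by
  refine ⟨(List.suffix_or_suffix_of_suffix hs hs').resolve_right fun h => ?_, ?_⟩
  · exact (weight_le_of_suffix h).not_gt hlt
  · rintro rfl
    exact lt_irrefl _ hlt

-- `z + y` has its leading base-5 digit both at `encode t` and at `encode t'`, so `t = t'`.
theorem suffix_of_weight_add_eq {s t s' t' : List ℕ} (hst : s <:+ t) (hne : s ≠ t)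
    (hst' : s' <:+ t') (hne' : s' ≠ t') {x y z : ℕ} (hxz : x < z) (hzy : 5 * z ≤ y)
    (hsum : weight s + weight t = x + y) (hsum' : weight s' + weight t' = z + y) :
    s <:+ s' ∧ s ≠ s' ∧ Nat.log 5 (z - x) = encode s' := by
  have htt' : t = t' := encode_injective <| by
    rw [← log_eq_encode_of_weight_add_eq hst (ne_nil_of_suffix_of_ne hst hne) hxz.le hzy hsum,
      ← log_eq_encode_of_weight_add_eq hst' (ne_nil_of_suffix_of_ne hst' hne') le_rfl hzy hsum']
  subst htt'
  have hdiff : weight s' - weight s = z - x := by omega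
  obtain ⟨hss', hne_ss'⟩ := suffix_of_weight_lt hst hst' (by omega)
  exact ⟨hss', hne_ss', hdiff ▸ log_weight_sub_eq_encode hss' hne_ss'⟩

def IsSuffixChain (σ : ℕ → List ℕ) : Prop :=
  ∀ m, σ m <:+ σ (m + 1) ∧ σ m ≠ σ (m + 1)

def HasInfiniteChain (T : Set (List ℕ)) : Prop :=
  ∃ σ, IsSuffixChain σ ∧ ∀ m, σ m ∈ T

namespace IsSuffixChain

variable {σ : ℕ → List ℕ}

theorem suffix (hσ : IsSuffixChain σ) {m n : ℕ} (hmn : m ≤ n) : σ m <:+ σ n := by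
  induction n, hmn using Nat.le_induction with
  | base => exact List.suffix_rfl
  | succ n _ ih => exact ih.trans (hσ n).1

theorem strictMono_weight (hσ : IsSuffixChain σ) : StrictMono fun m => weight (σ m) :=
  strictMono_nat_of_lt_succ fun m => weight_lt_of_suffix (hσ m).1 (hσ m).2

theorem le_length (hσ : IsSuffixChain σ) (m : ℕ) : m ≤ (σ m).length :=
  StrictMono.id_le (strictMono_nat_of_lt_succ fun m =>
    (hσ m).1.length_le.lt_of_ne fun h => (hσ m).2 ((hσ m).1.eq_of_length h)) m

end IsSuffixChain

def pairWeights (T : Set (List ℕ)) : Set ℕ :=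
  {n | ∃ s ∈ T, ∃ t ∈ T, s <:+ t ∧ s ≠ t ∧ weight s + weight t = n}

theorem HasInfiniteChain.isIP2_pairWeights {T : Set (List ℕ)} (hT : HasInfiniteChain T) :
    IsIP2 (pairWeights T) := by
  obtain ⟨σ, hσ, hσT⟩ := hT
  refine isIP2_iff_exists_injective.mpr ⟨_, hσ.strictMono_weight.injective, fun i j hij => ?_⟩
  wlog hlt : i < j generalizing i j
  · simpa only [add_comm] using this j i hij.symm (by omega)
  exact ⟨σ i, hσT i, σ j, hσT j, hσ.suffix hlt.le,
    fun h => (hσ.strictMono_weight hlt).ne (congrArg weight h), rfl⟩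

theorem IsIP2.hasInfiniteChain {T : Set (List ℕ)} (hT : IsIP2 (pairWeights T)) :
    HasInfiniteChain T := by
  obtain ⟨b, hb⟩ := hT.exists_sparse_seq (c := 5) (by norm_num)
  have nested : ∀ i j k, i < j → j < k → ∀ s t s' t', s <:+ t → s ≠ t → s' <:+ t' → s' ≠ t' →
      weight s + weight t = b i + b k → weight s' + weight t' = b j + b k →
      s <:+ s' ∧ s ≠ s' ∧ Nat.log 5 (b j - b i) = encode s' :=
    fun i j k hij hjk s t s' t' hst hne hst' hne' hsum hsum' =>
      suffix_of_weight_add_eq hst hne hst' hne' (by have := (hb i j hij).1; omega)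
        (hb j k hjk).1.le hsum hsum'
  -- the bottom of a representation of `b j + b k` is determined by `j` alone
  have encode_eq : ∀ j k, 0 < j → j < k → ∀ s t, s <:+ t → s ≠ t →
      weight s + weight t = b j + b k → encode s = Nat.log 5 (b j - b 0) := by
    intro j k hj hjk s t hst hne hsum
    obtain ⟨s₀, -, t₀, -, hst₀, hne₀, hsum₀⟩ := (hb 0 k (hj.trans hjk)).2
    exact (nested 0 j k hj hjk s₀ t₀ s t hst₀ hne₀ hst hne hsum₀ hsum).2.2.symm
  choose σ hσT τ hτT hστ hne hsum using fun m => (hb (m + 1) (m + 2) (by omega)).2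
  refine ⟨σ, fun m => ?_, hσT⟩
  obtain ⟨s, -, t, -, hst, hne_st, hsum_st⟩ := (hb (m + 1) (m + 3) (by omega)).2
  have hs : s = σ m := encode_injective <| by
    rw [encode_eq _ _ (by omega) (by omega) s t hst hne_st hsum_st,
      encode_eq _ _ (by omega) (by omega) (σ m) (τ m) (hστ m) (hne m) (hsum m)]
  subst hs
  exact (nested (m + 1) (m + 2) (m + 3) (by omega) (by omega) _ t (σ (m + 1)) (τ (m + 1))
    hst hne_st (hστ _) (hne _) hsum_st (hsum _)).imp_right And.left

theorem isIP2_pairWeights_iff {T : Set (List ℕ)} : IsIP2 (pairWeights T) ↔ HasInfiniteChain T :=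
  ⟨IsIP2.hasInfiniteChain, HasInfiniteChain.isIP2_pairWeights⟩

-- `[α (n-1), …, α 0]`: newest value first, so that initial segments are ordered by `<:+`.
def revSeg (α : ℕ → ℕ) : ℕ → List ℕ
  | 0 => []
  | n + 1 => α n :: revSeg α n

theorem reverse_revSeg (α : ℕ → ℕ) (n : ℕ) : (revSeg α n).reverse = (List.range n).map α := by
  induction n with
  | zero => rfl
  | succ n ih => simp [revSeg, ih, List.range_succ]

@[simp]
theorem length_revSeg (α : ℕ → ℕ) (n : ℕ) : (revSeg α n).length = n := by
  simpa using congrArg List.length (reverse_revSeg α n)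

theorem eq_of_revSeg_eq {α β : ℕ → ℕ} {n : ℕ} (h : revSeg α n = revSeg β n) {k : ℕ}
    (hk : k < n) : α k = β k := by
  have := congrArg List.reverse h
  rw [reverse_revSeg, reverse_revSeg, List.map_inj_left] at this
  exact this k (List.mem_range.mpr hk)

theorem IsSuffixChain.exists_revSeg_eq {σ : ℕ → List ℕ} (hσ : IsSuffixChain σ) :
    ∃ α : ℕ → ℕ, ∀ m, revSeg α (σ m).length = σ m := by
  have getElem_eq : ∀ m n k (hm : k < (σ m).length) (hn : k < (σ n).length),
      (σ m).reverse[k]'(by simpa using hm) = (σ n).reverse[k]'(by simpa using hn) := by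
    intro m n k hm hn
    wlog hmn : m ≤ n generalizing m n
    · exact (this n m hn hm (by omega)).symm
    exact List.IsPrefix.getElem (List.reverse_prefix.mpr (hσ.suffix hmn)) _
  refine ⟨fun k => (σ (k + 1)).reverse.getD k 0, fun m => ?_⟩
  rw [← List.reverse_inj, reverse_revSeg]
  refine List.ext_getElem (by simp) fun k hk _ => ?_
  have hk' : k < (σ (k + 1)).length := hσ.le_length (k + 1)
  simp only [List.getElem_map, List.getElem_range]
  rw [List.getD_eq_getElem _ _ (by simpa using hk')]
  exact getElem_eq _ _ _ hk' (by simpa using hk)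

section RangeTree

variable {Y : Type*}

def rangeTree [PseudoMetricSpace Y] (h : (ℕ → ℕ) → Y) (y : Y) : Set (List ℕ) :=
  {l | ∃ α, revSeg α l.length = l ∧ dist y (h α) < (1 / 2 : ℝ) ^ l.length}

theorem isOpen_setOf_mem_rangeTree [PseudoMetricSpace Y] (h : (ℕ → ℕ) → Y) (l : List ℕ) :
    IsOpen {y | l ∈ rangeTree h y} := by
  have : {y | l ∈ rangeTree h y} =
      ⋃ α, ⋃ (_ : revSeg α l.length = l), Metric.ball (h α) ((1 / 2 : ℝ) ^ l.length) := by
    ext y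
    simp [rangeTree, Metric.mem_ball]
  rw [this]
  exact isOpen_iUnion fun α => isOpen_iUnion fun _ => Metric.isOpen_ball

theorem mem_range_iff_hasInfiniteChain_rangeTree [MetricSpace Y] {h : (ℕ → ℕ) → Y}
    (hh : Continuous h) (y : Y) : y ∈ Set.range h ↔ HasInfiniteChain (rangeTree h y) := by
  constructor
  · rintro ⟨α, rfl⟩
    refine ⟨revSeg α, fun m => ⟨List.suffix_cons _ _, (List.cons_ne_self _ _).symm⟩,
      fun m => ⟨α, by simp, by simp⟩⟩
  · rintro ⟨σ, hσ, hσT⟩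
    obtain ⟨α, hα⟩ := hσ.exists_revSeg_eq
    choose β hβα hβy using hσT
    have hβ : Filter.Tendsto β Filter.atTop (nhds α) := by
      refine tendsto_pi_nhds.mpr fun k => tendsto_nhds_of_eventually_eq ?_
      filter_upwards [Filter.eventually_gt_atTop k] with m hm
      exact eq_of_revSeg_eq ((hβα m).trans (hα m).symm) (hm.trans_le (hσ.le_length m))
    have hβ' : Filter.Tendsto (fun m => h (β m)) Filter.atTop (nhds y) := by
      refine tendsto_iff_dist_tendsto_zero.mpr (squeeze_zero (fun _ => dist_nonneg) (fun m => ?_)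
        (tendsto_pow_atTop_nhds_zero_of_lt_one (r := (1 / 2 : ℝ)) (by norm_num) (by norm_num)))
      calc dist (h (β m)) y ≤ (1 / 2 : ℝ) ^ (σ m).length := by rw [dist_comm]; exact (hβy m).le
        _ ≤ (1 / 2 : ℝ) ^ m := pow_le_pow_of_le_one (by norm_num) (by norm_num) (hσ.le_length m)
    exact ⟨α, tendsto_nhds_unique ((hh.tendsto α).comp hβ) hβ'⟩

end RangeTree

theorem MeasureTheory.AnalyticSet.exists_hasInfiniteChain_iff {Y : Type*} [TopologicalSpace Y]
    [TopologicalSpace.MetrizableSpace Y] {A : Set Y} (hA : AnalyticSet A) :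
    ∃ T : Y → Set (List ℕ),
      (∀ l, IsOpen {y | l ∈ T y}) ∧ ∀ y, y ∈ A ↔ HasInfiniteChain (T y) := by
  let := TopologicalSpace.metrizableSpaceMetric Y
  rw [AnalyticSet_def] at hA
  rcases hA with rfl | ⟨h, hh, rfl⟩
  · exact ⟨fun _ => ∅, fun _ => by simp, fun y => by simp [HasInfiniteChain]⟩
  · exact ⟨rangeTree h, isOpen_setOf_mem_rangeTree h, mem_range_iff_hasInfiniteChain_rangeTree hh⟩

theorem isOpen_setOf_mem_pairWeights {Y : Type*} [TopologicalSpace Y] {T : Y → Set (List ℕ)}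
    (hT : ∀ l, IsOpen {y | l ∈ T y}) (n : ℕ) : IsOpen {y | n ∈ pairWeights (T y)} := by
  have : {y | n ∈ pairWeights (T y)} =
      ⋃ s, ⋃ t, ⋃ (_ : s <:+ t ∧ s ≠ t ∧ weight s + weight t = n),
        {y | s ∈ T y} ∩ {y | t ∈ T y} := by
    ext y
    simp only [pairWeights, Set.mem_ofPred_eq, Set.mem_iUnion, Set.mem_inter_iff, exists_prop]
    grind
  rw [this]
  exact isOpen_iUnion fun s => isOpen_iUnion fun t => isOpen_iUnion fun _ => (hT s).inter (hT t)

theorem analyticSet_compl_H2 : AnalyticSet H2ᶜ := by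
  let S : Set ((ℕ → Bool) × (ℕ → ℕ)) :=
    {p | ∀ i j, i ≠ j → p.2 i ≠ p.2 j ∧ p.1 (p.2 i + p.2 j) = true}
  have hS : MeasurableSet S := by
    have eval : Measurable fun q : (ℕ → Bool) × ℕ => q.1 q.2 :=
      measurable_from_prod_countable_left fun n => measurable_pi_apply n
    simp only [S, Set.ofPred_forall]
    refine .iInter fun i => .iInter fun j => .iInter fun _ => .inter ?_ ?_
    · exact (measurableSet_eq_fun ((measurable_pi_apply i).comp measurable_snd)
        ((measurable_pi_apply j).comp measurable_snd)).compl
    · have : Measurable fun p : (ℕ → Bool) × (ℕ → ℕ) => (p.1, p.2 i + p.2 j) := by fun_prop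
      exact measurableSet_eq_fun (eval.comp this) measurable_const
  have hH2 : H2ᶜ = Prod.fst '' S := by
    ext x
    simp only [H2, Set.mem_compl_iff, Set.mem_ofPred_eq, not_not, isIP2_iff_exists_injective]
    refine ⟨fun ⟨g, hg, hgx⟩ => ⟨(x, g), fun i j hij => ⟨hg.ne hij, hgx i j hij⟩, rfl⟩, ?_⟩
    rintro ⟨⟨x, g⟩, hS, rfl⟩
    exact ⟨g, fun i j => not_imp_not.mp fun hij => (hS i j hij).1, fun i j hij => (hS i j hij).2⟩
  have : PolishSpace ((ℕ → Bool) × (ℕ → ℕ)) := {}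
  rw [hH2]
  exact hS.analyticSet.image_of_continuous continuous_fst

/-- `H₂` is `Π¹₁`-complete: its complement is analytic, and every coanalytic subset
of every Polish space Borel-reduces to it. -/
theorem H2_coanalytic_complete :
    AnalyticSet H2ᶜ ∧
      ∀ (Y : Type) [TopologicalSpace Y] [PolishSpace Y]
        [MeasurableSpace Y] [BorelSpace Y] (B : Set Y),
        AnalyticSet Bᶜ →
          ∃ f : Y → (ℕ → Bool), Measurable f ∧ f ⁻¹' H2 = B := by
  classical
  refine ⟨analyticSet_compl_H2, fun Y _ _ _ _ B hB => ?_⟩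
  obtain ⟨T, hT_open, hT⟩ := hB.exists_hasInfiniteChain_iff
  refine ⟨fun y n => decide (n ∈ pairWeights (T y)), measurable_pi_lambda _ fun n =>
    measurable_to_bool ?_, ?_⟩
  · convert (isOpen_setOf_mem_pairWeights hT_open n).measurableSet
    ext y
    simp
  · ext y
    simp [H2, isIP2_pairWeights_iff, ← hT]
end

section
/- The family I_M of all sets A ⊆ ω^{<ω} such that M(B) ⊄ A for every infinite B ⊆ ω, regarded as a subset of the Polish space P(ω^{<ω}) ≅ 2^{ω^{<ω}}, is Π¹₁-complete: its complement is analytic, and for every Polish space Y and every coanalytic set B ⊆ Y there is a Borel measurable function f : Y → P(ω^{<ω}) with f⁻¹(I_M) = B. -/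
open MeasureTheory

/-- `M(B)`: the set of strictly increasing finite sequences with entries in `B`. -/
def MB (B : Set ℕ) : Set (List ℕ) :=
  {σ | (∀ n ∈ σ, n ∈ B) ∧ σ.Pairwise (· < ·)}

/-- The family `I_M` of all `A ⊆ ω^{<ω}` such that `M(B) ⊄ A` for every infinite
`B ⊆ ω`, viewed inside the Cantor space `2^{ω^{<ω}} ≅ P(ω^{<ω})`. -/
def IM : Set (List ℕ → Bool) :=
  {x | ∀ B : Set ℕ, B.Infinite → ¬ MB B ⊆ {σ | x σ = true}}

open Metric

namespace IMAux

/-- auxiliary encoding on reversed lists -/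
def er : List ℕ → ℕ
  | [] => 0
  | a :: l => Nat.pair a (er l) + 1

lemma er_inj : Function.Injective er := by
  intro x
  induction x with
  | nil =>
    intro y h
    cases y with
    | nil => rfl
    | cons b m => simp [er] at h
  | cons a l ih =>
    intro y h
    cases y with
    | nil => simp [er] at h
    | cons b m =>
      simp only [er, Nat.add_right_cancel_iff] at h
      rcases Nat.pair_eq_pair.1 h with ⟨h1, h2⟩
      rw [h1, ih h2]

lemma lt_er_cons (a : ℕ) (l : List ℕ) : er l < er (a :: l) := by
  simpa [er] using Nat.lt_succ_of_le (Nat.right_le_pair a (er l))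

lemma er_lt_append (u v : List ℕ) (h : u ≠ []) : er v < er (u ++ v) := by
  induction u with
  | nil => exact absurd rfl h
  | cons a w ih =>
    rcases eq_or_ne w [] with rfl | hw
    · simpa using lt_er_cons a v
    · exact (ih hw).trans (lt_er_cons a (w ++ v))

/-- The encoding of finite sequences into `ℕ`, strictly monotone w.r.t. strict prefix. -/
def enc (s : List ℕ) : ℕ := er s.reverse

lemma enc_inj : Function.Injective enc := by
  intro s t h
  have := er_inj h
  simpa using congrArg List.reverse this

lemma enc_lt_of_prefix {s t : List ℕ} (h : s <+: t) (hne : s ≠ t) : enc s < enc t := by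
  rcases h with ⟨r, rfl⟩
  have hr : r ≠ [] := by rintro rfl; simp at hne
  have : r.reverse ≠ [] := by simpa using hr
  simpa [enc, List.reverse_append] using er_lt_append r.reverse s.reverse this



/-- Cylinder: extensions of a finite sequence. -/
def cyl (s : List ℕ) : Set (ℕ → ℕ) := {w | ∀ i, i < s.length → w i = s.getD i 0}

lemma cyl_nonempty (s : List ℕ) : (cyl s).Nonempty :=
  ⟨fun i => s.getD i 0, fun _ _ => rfl⟩

lemma cyl_anti {s t : List ℕ} (h : s <+: t) : cyl t ⊆ cyl s := by
  intro w hw i hi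
  have hlen : s.length ≤ t.length := h.length_le
  have : s.getD i 0 = t.getD i 0 := by
    rcases h with ⟨r, rfl⟩
    simp [List.getD, List.getElem?_append_left hi]
  rw [this]
  exact hw i (lt_of_lt_of_le hi hlen)

variable {Y : Type} [MetricSpace Y]

/-- The tree of approximations to membership of `y` in the range of `f`. -/
def Tset (f : (ℕ → ℕ) → Y) (y : Y) : Set (List ℕ) :=
  {s | infDist y (f '' cyl s) ≤ (1/2 : ℝ) ^ s.length}

lemma Tset_tree {f : (ℕ → ℕ) → Y} {y : Y} {s t : List ℕ} (hp : s <+: t)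
    (ht : t ∈ Tset f y) : s ∈ Tset f y := by
  have h1 : infDist y (f '' cyl s) ≤ infDist y (f '' cyl t) :=
    infDist_le_infDist_of_subset (Set.image_mono (cyl_anti hp))
      ((cyl_nonempty t).image f)
  have h2 : ((1:ℝ)/2) ^ t.length ≤ (1/2 : ℝ) ^ s.length :=
    pow_le_pow_of_le_one (by norm_num) (by norm_num) hp.length_le
  exact le_trans h1 (le_trans ht h2)

lemma isClosed_Tset_mem (f : (ℕ → ℕ) → Y) (s : List ℕ) :
    IsClosed {y : Y | s ∈ Tset f y} := by
  have : {y : Y | s ∈ Tset f y}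
      = {y : Y | infDist y (f '' cyl s) ≤ (1/2 : ℝ) ^ s.length} := rfl
  rw [this]
  exact isClosed_le (continuous_infDist_pt _) continuous_const

/-- restriction of a branch -/
def res (z : ℕ → ℕ) (n : ℕ) : List ℕ := List.ofFn (fun i : Fin n => z i)

@[simp] lemma res_length (z : ℕ → ℕ) (n : ℕ) : (res z n).length = n := by
  simp [res]

lemma res_getD (z : ℕ → ℕ) {n i : ℕ} (h : i < n) : (res z n).getD i 0 = z i := by
  simp [res, List.getD, List.getElem?_ofFn, h]

lemma mem_cyl_res (z : ℕ → ℕ) (n : ℕ) : z ∈ cyl (res z n) := by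
  intro i hi
  rw [res_getD z (by simpa using hi)]

lemma res_prefix (z : ℕ → ℕ) {n m : ℕ} (h : n ≤ m) : res z n <+: res z m := by
  rw [List.prefix_iff_eq_take]
  apply List.ext_getElem
  · simp [h]
  · intro i h1 h2
    simp [res]

lemma res_mem_Tset {f : (ℕ → ℕ) → Y} {z : ℕ → ℕ} (n : ℕ) :
    res z n ∈ Tset f (f z) := by
  have hmem : f z ∈ f '' cyl (res z n) := ⟨z, mem_cyl_res z n, rfl⟩
  have h : infDist (f z) (f '' cyl (res z n)) ≤ dist (f z) (f z) :=
    infDist_le_dist_of_mem hmem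
  simp only [Tset, Set.mem_setOf_eq, res_length]
  refine le_trans h ?_
  simp only [dist_self]
  positivity

lemma eq_of_branch {f : (ℕ → ℕ) → Y} (hf : Continuous f) {z : ℕ → ℕ} {y : Y}
    (h : ∀ n, res z n ∈ Tset f y) : y = f z := by
  have key : ∀ n : ℕ, ∃ w ∈ cyl (res z n), dist y (f w) < 2 * (1/2 : ℝ) ^ n := by
    intro n
    have hne : (f '' cyl (res z n)).Nonempty := (cyl_nonempty _).image f
    have hlt : infDist y (f '' cyl (res z n)) < 2 * (1/2 : ℝ) ^ n := by
      have := h n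
      simp only [Tset, Set.mem_setOf_eq, res_length] at this
      nlinarith [pow_pos (by norm_num : (0:ℝ) < 1/2) n]
    rcases (infDist_lt_iff hne).1 hlt with ⟨p, ⟨w, hw, rfl⟩, hd⟩
    exact ⟨w, hw, hd⟩
  choose w hw hd using key
  have hwz : Filter.Tendsto w Filter.atTop (nhds z) := by
    rw [tendsto_pi_nhds]
    intro i
    apply Filter.Tendsto.congr' _ (tendsto_const_nhds (x := z i))
    filter_upwards [Filter.eventually_gt_atTop i] with n hn
    exact (((hw n) i (by simpa using hn)).trans (res_getD z hn)).symm
  have h1 : Filter.Tendsto (fun n => f (w n)) Filter.atTop (nhds (f z)) :=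
    (hf.tendsto z).comp hwz
  have h2 : Filter.Tendsto (fun n => dist y (f (w n))) Filter.atTop (nhds (dist y (f z))) :=
    Filter.Tendsto.dist tendsto_const_nhds h1
  have h3 : Filter.Tendsto (fun n : ℕ => 2 * (1/2 : ℝ) ^ n) Filter.atTop (nhds 0) := by
    have := tendsto_pow_atTop_nhds_zero_of_lt_one (by norm_num : (0:ℝ) ≤ 1/2) (by norm_num)
    simpa using this.const_mul 2
  have hle : dist y (f z) ≤ 0 :=
    le_of_tendsto_of_tendsto' h2 h3 (fun n => (hd n).le)
  have : dist y (f z) = 0 := le_antisymm hle dist_nonneg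
  exact eq_of_dist_eq_zero this

/-- strict prefix relation -/
def sprefix (s t : List ℕ) : Prop := s <+: t ∧ s ≠ t

/-- The set of increasing sequences coding chains in `T`. -/
def ATset (T : Set (List ℕ)) : Set (List ℕ) :=
  {σ | ∃ l : List (List ℕ), σ = l.map enc ∧ l.Chain' sprefix ∧ ∀ s ∈ l, s ∈ T}

lemma map_enc_inj : Function.Injective (List.map enc) :=
  List.map_injective_iff.2 enc_inj

lemma isClosed_ATset_mem {Y : Type} [MetricSpace Y] (f : (ℕ → ℕ) → Y) (σ : List ℕ) :
    IsClosed {y : Y | σ ∈ ATset (Tset f y)} := by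
  by_cases h : ∃ l : List (List ℕ), σ = l.map enc ∧ l.Chain' sprefix
  · rcases h with ⟨l, rfl, hc⟩
    have he : {y : Y | l.map enc ∈ ATset (Tset f y)} = ⋂ s ∈ l, {y | s ∈ Tset f y} := by
      ext y
      simp only [Set.mem_setOf_eq, Set.mem_iInter]
      constructor
      · rintro ⟨l', hl', _, hm⟩ s hs
        exact hm s ((map_enc_inj hl') ▸ hs)
      · intro hm
        exact ⟨l, rfl, hc, hm⟩
    rw [he]
    exact isClosed_biInter fun s _ => isClosed_Tset_mem f s
  · have : {y : Y | σ ∈ ATset (Tset f y)} = ∅ := by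
      ext y
      simp only [Set.mem_setOf_eq, Set.mem_empty_iff_false, iff_false]
      rintro ⟨l, hl, hc, _⟩
      exact h ⟨l, hl, hc⟩
    rw [this]; exact isClosed_empty

lemma sorted_map_of_range {g : ℕ → ℕ} (hg : StrictMono g) :
    ∀ σ : List ℕ, σ.Pairwise (· < ·) → (∀ b ∈ σ, b ∈ Set.range g) →
      ∃ ns : List ℕ, ns.Pairwise (· < ·) ∧ σ = ns.map g := by
  intro σ
  induction σ with
  | nil => exact fun _ _ => ⟨[], by simp, by simp⟩
  | cons a rest ih =>
    intro hs hr
    obtain ⟨n, rfl⟩ := hr a (by simp)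
    obtain ⟨ns, hns, rfl⟩ := ih hs.of_cons (fun b hb => hr b (by simp [hb]))
    refine ⟨n :: ns, ?_, by simp⟩
    rw [List.pairwise_cons] at hs ⊢
    exact ⟨fun m hm => hg.lt_iff_lt.1 (hs.1 (g m) (List.mem_map_of_mem hm)), hns⟩

lemma forward {Y : Type} [MetricSpace Y] (f : (ℕ → ℕ) → Y) (z : ℕ → ℕ) :
    ∃ B' : Set ℕ, B'.Infinite ∧ MB B' ⊆ ATset (Tset f (f z)) := by
  set g : ℕ → ℕ := fun n => enc (res z (n+1)) with hgdef
  have hg : StrictMono g := by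
    intro a b h
    refine enc_lt_of_prefix (res_prefix z (by omega)) fun he => ?_
    have := congrArg List.length he
    simp at this; omega
  refine ⟨Set.range g, Set.infinite_range_of_injective hg.injective, ?_⟩
  intro σ hσ
  obtain ⟨ns, hns, rfl⟩ := sorted_map_of_range hg σ hσ.2 hσ.1
  refine ⟨ns.map (fun n => res z (n+1)), by simp [hgdef, List.map_map, Function.comp], ?_, ?_⟩
  · unfold List.Chain'; rw [List.isChain_map]
    refine List.Pairwise.isChain (hns.imp fun {n m} h => ?_)
    refine ⟨res_prefix z (by omega), fun he => ?_⟩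
    have := congrArg List.length he
    simp at this; omega
  · intro s hs
    obtain ⟨n, _, rfl⟩ := List.mem_map.1 hs
    exact res_mem_Tset _

lemma exists_strictMono_range_subset {B : Set ℕ} (hB : B.Infinite) :
    ∃ g : ℕ → ℕ, StrictMono g ∧ Set.range g ⊆ B := by
  classical
  haveI : Infinite B := hB.to_subtype
  refine ⟨fun n => ((Nat.Subtype.orderIsoOfNat B n : B) : ℕ), ?_, ?_⟩
  · intro a b h
    exact Subtype.coe_lt_coe.2 ((Nat.Subtype.orderIsoOfNat B).strictMono h)
  · rintro n ⟨k, rfl⟩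
    exact (Nat.Subtype.orderIsoOfNat B k).2
lemma getD_prefix {α : Type} (d : α) {s t : List α} (h : s <+: t) {i : ℕ}
    (hi : i < s.length) : s.getD i d = t.getD i d := by
  rcases h with ⟨r, rfl⟩
  simp [List.getD, List.getElem?_append_left hi]

lemma sprefix_length_lt {s t : List ℕ} (h : sprefix s t) : s.length < t.length := by
  rcases Nat.lt_or_ge s.length t.length with h' | h'
  · exact h'
  · exact absurd (h.1.eq_of_length (le_antisymm h.1.length_le h')) h.2

lemma backward {Y : Type} [MetricSpace Y] {f : (ℕ → ℕ) → Y} (hf : Continuous f) {y : Y}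
    {B' : Set ℕ} (hB : B'.Infinite) (hsub : MB B' ⊆ ATset (Tset f y)) :
    ∃ z, f z = y := by
  obtain ⟨m, hm, hmr⟩ := exists_strictMono_range_subset hB
  have hmb : ∀ k, res m k ∈ MB B' := by
    intro k
    constructor
    · intro n hn
      obtain ⟨i, rfl⟩ := List.mem_ofFn.1 hn
      exact hmr ⟨i, rfl⟩
    · exact List.pairwise_ofFn.2 fun a b hab => hm (by exact_mod_cast hab)
  choose L hL1 hL2 hL3 using fun k => hsub (hmb k)
  have Llen : ∀ k, (L k).length = k := by
    intro k
    have := congrArg List.length (hL1 k)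
    simpa using this.symm
  have Lconsist : ∀ k j, k ≤ j → L k = (L j).take k := by
    intro k j hkj
    apply map_enc_inj
    rw [List.map_take, ← hL1 j, ← hL1 k]
    have hpre : res m k <+: res m j := res_prefix m hkj
    rw [List.prefix_iff_eq_take] at hpre
    simpa using hpre
  set s : ℕ → List ℕ := fun k => (L (k+1)).getD k [] with hs
  have smem : ∀ k, s k ∈ Tset f y := by
    intro k
    apply hL3 (k+1)
    rw [hs]
    simp only
    rw [List.getD_eq_getElem _ _ (by rw [Llen]; omega)]
    exact List.getElem_mem _
  have sget : ∀ k j, k < j → s k = (L j).getD k [] := by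
    intro k j hkj
    have h1 : L (k+1) = (L j).take (k+1) := Lconsist (k+1) j hkj
    rw [hs]
    simp only
    rw [h1]
    exact getD_prefix [] (List.take_prefix _ _) (by simp [Llen]; omega)
  have schain : ∀ k, sprefix (s k) (s (k+1)) := by
    intro k
    have hc := hL2 (k+2)
    unfold List.Chain' at hc; rw [List.isChain_iff_getElem] at hc
    have hk : k + 1 < (L (k+2)).length := by rw [Llen]; omega
    have := hc k hk
    have e1 : s k = (L (k+2)).get ⟨k, by rw [Llen]; omega⟩ := by
      rw [sget k (k+2) (by omega), List.getD_eq_getElem _ _ (by rw [Llen]; omega)]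
      rfl
    have e2 : s (k+1) = (L (k+2)).get ⟨k+1, by rw [Llen]; omega⟩ := by
      rw [sget (k+1) (k+2) (by omega), List.getD_eq_getElem _ _ (by rw [Llen]; omega)]
      rfl
    rw [e1, e2]
    exact this
  have spre : ∀ k j, k ≤ j → s k <+: s j := by
    intro k j hkj
    induction j, hkj using Nat.le_induction with
    | base => exact List.prefix_refl _
    | succ n hmn ih => exact ih.trans (schain n).1
  have slen : ∀ k, k ≤ (s k).length := by
    intro k
    induction k with
    | zero => omega
    | succ n ih => have := sprefix_length_lt (schain n); omega
  set z : ℕ → ℕ := fun n => (s (n+1)).getD n 0 with hz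
  have hres : ∀ n, res z n = (s n).take n := by
    intro n
    apply List.ext_getElem
    · simp [Nat.min_eq_left (slen n)]
    · intro i h1 h2
      have hin : i < n := by simpa using h1
      have hles : i < (s (i+1)).length := by have := slen (i+1); omega
      have hgd : (s (i+1)).getD i 0 = (s n).getD i 0 :=
        getD_prefix 0 (spre (i+1) n hin) hles
      have hlsn : i < (s n).length := by have := slen n; omega
      calc (res z n)[i] = z i := by
            rw [← List.getD_eq_getElem _ 0 h1, res_getD z hin]
        _ = (s n)[i] := by rw [hz]; simp only; rw [hgd, List.getD_eq_getElem _ _ hlsn]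
        _ = ((s n).take n)[i] := by simp [List.getElem_take]
  have hbr : ∀ n, res z n ∈ Tset f y := by
    intro n
    refine Tset_tree ?_ (smem n)
    rw [hres n]
    exact List.take_prefix _ _
  exact ⟨z, (eq_of_branch hf hbr).symm⟩

lemma MB_mono {B C : Set ℕ} (h : B ⊆ C) : MB B ⊆ MB C :=
  fun _ hσ => ⟨fun n hn => h (hσ.1 n hn), hσ.2⟩

/-- The Borel set projecting onto `IMᶜ`. -/
def Pset : Set ((ℕ → ℕ) × (List ℕ → Bool)) :=
  {p | StrictMono p.1 ∧ ∀ σ ∈ MB (Set.range p.1), p.2 σ = true}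

lemma IM_compl_eq : IMᶜ = Prod.snd '' Pset := by
  ext x
  simp only [Set.mem_compl_iff, IM, Set.mem_setOf_eq, not_forall]
  constructor
  · rintro ⟨B, hB, hsub⟩
    rw [not_not] at hsub
    obtain ⟨g, hg, hgr⟩ := exists_strictMono_range_subset hB
    exact ⟨(g, x), ⟨hg, fun σ hσ => hsub (MB_mono hgr hσ)⟩, rfl⟩
  · rintro ⟨⟨g, x⟩, ⟨hg, hsub⟩, rfl⟩
    exact ⟨Set.range g, Set.infinite_range_of_injective hg.injective,
      not_not.2 fun σ hσ => hsub σ hσ⟩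

lemma measurableSet_Pset : MeasurableSet Pset := by
  have h1 : MeasurableSet {p : (ℕ → ℕ) × (List ℕ → Bool) | StrictMono p.1} := by
    have he : {p : (ℕ → ℕ) × (List ℕ → Bool) | StrictMono p.1}
        = ⋂ n, {p | p.1 n < p.1 (n+1)} := by
      ext p
      simp only [Set.mem_setOf_eq, Set.mem_iInter]
      exact ⟨fun h n => h (Nat.lt_succ_self n), fun h => strictMono_nat_of_lt_succ h⟩
    rw [he]
    exact MeasurableSet.iInter fun n =>
      measurableSet_lt (measurable_fst.eval) (measurable_fst.eval)
  have hσm : ∀ σ : List ℕ, MeasurableSet {p : (ℕ → ℕ) × (List ℕ → Bool) |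
      σ ∈ MB (Set.range p.1)} := by
    intro σ
    by_cases hs : σ.Pairwise (· < ·)
    · have he : {p : (ℕ → ℕ) × (List ℕ → Bool) | σ ∈ MB (Set.range p.1)}
          = ⋂ n ∈ σ, ⋃ k, {p | p.1 k = n} := by
        ext p
        simp only [Set.mem_setOf_eq, MB, Set.mem_iInter, Set.mem_iUnion]
        constructor
        · rintro ⟨h1, _⟩ n hn
          obtain ⟨k, hk⟩ := h1 n hn
          exact ⟨k, hk⟩
        · intro h
          exact ⟨fun n hn => h n hn, hs⟩
      rw [he]
      refine MeasurableSet.biInter ((List.finite_toSet σ).countable) fun n _ =>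
        MeasurableSet.iUnion fun k => ?_
      have : {p : (ℕ → ℕ) × (List ℕ → Bool) | p.1 k = n}
          = (fun p : (ℕ → ℕ) × (List ℕ → Bool) => p.1 k) ⁻¹' {n} := rfl
      rw [this]
      exact (measurable_fst.eval) (measurableSet_singleton n)
    · have he : {p : (ℕ → ℕ) × (List ℕ → Bool) | σ ∈ MB (Set.range p.1)} = ∅ := by
        ext p
        simp only [Set.mem_setOf_eq, MB, Set.mem_empty_iff_false, iff_false]
        exact fun h => hs h.2
      rw [he]; exact MeasurableSet.empty
  have h2 : MeasurableSet {p : (ℕ → ℕ) × (List ℕ → Bool) |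
      ∀ σ ∈ MB (Set.range p.1), p.2 σ = true} := by
    have he : {p : (ℕ → ℕ) × (List ℕ → Bool) | ∀ σ ∈ MB (Set.range p.1), p.2 σ = true}
        = ⋂ σ : List ℕ, {p : (ℕ → ℕ) × (List ℕ → Bool) | σ ∈ MB (Set.range p.1)}ᶜ
            ∪ {p | p.2 σ = true} := by
      ext p
      simp only [Set.mem_iInter, Set.mem_union, Set.mem_compl_iff, Set.mem_setOf_eq]
      constructor
      · intro h σ
        by_cases hσ : σ ∈ MB (Set.range p.1)
        · exact Or.inr (h σ hσ)
        · exact Or.inl hσ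
      · intro h σ hσ
        rcases h σ with h' | h'
        · exact absurd hσ h'
        · exact h'
    rw [he]
    refine MeasurableSet.iInter fun σ => MeasurableSet.union (hσm σ).compl ?_
    have : {p : (ℕ → ℕ) × (List ℕ → Bool) | p.2 σ = true}
        = (fun p : (ℕ → ℕ) × (List ℕ → Bool) => p.2 σ) ⁻¹' {true} := rfl
    rw [this]
    exact (measurable_snd.eval) (measurableSet_singleton true)
  exact h1.inter h2

lemma measurable_decide_of_measurableSet {Y : Type} [MeasurableSpace Y] {P : Y → Prop}
    [DecidablePred P] (h : MeasurableSet {y | P y}) :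
    Measurable fun y => decide (P y) := by
  apply measurable_to_countable
  intro y
  by_cases hy : P y
  · have he : (fun y => decide (P y)) ⁻¹' {decide (P y)} = {y | P y} := by
      ext y'; simp [hy]
    rw [he]; exact h
  · have he : (fun y => decide (P y)) ⁻¹' {decide (P y)} = {y | P y}ᶜ := by
      ext y'; simp [hy]
    rw [he]; exact h.compl

end IMAux


/-- `I_M` is `Π¹₁`-complete: its complement is analytic, and every coanalytic subset
of every Polish space Borel-reduces to it. -/
theorem IM_coanalytic_complete :
    AnalyticSet IMᶜ ∧
      ∀ (Y : Type) [TopologicalSpace Y] [PolishSpace Y]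
        [MeasurableSpace Y] [BorelSpace Y] (B : Set Y),
        AnalyticSet Bᶜ →
          ∃ f : Y → (List ℕ → Bool), Measurable f ∧ f ⁻¹' IM = B := by
  classical
  constructor
  · rw [IMAux.IM_compl_eq]
    exact IMAux.measurableSet_Pset.analyticSet_image measurable_snd
  · intro Y _ _ _ _ B hB
    rw [MeasureTheory.AnalyticSet_def] at hB
    rcases hB with h | ⟨f, hf, hfr⟩
    · refine ⟨fun _ _ => false, measurable_const, ?_⟩
      have hBu : B = Set.univ := Set.compl_empty_iff.1 h
      rw [hBu]
      ext y
      simp only [Set.mem_preimage, Set.mem_univ, iff_true]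
      intro B' hB' hsub
      have : ([] : List ℕ) ∈ MB B' := ⟨by simp, List.Pairwise.nil⟩
      simpa using hsub this
    · letI := TopologicalSpace.upgradeIsCompletelyMetrizable Y
      refine ⟨fun y σ => decide (σ ∈ IMAux.ATset (IMAux.Tset f y)), ?_, ?_⟩
      · apply measurable_pi_lambda
        intro σ
        exact IMAux.measurable_decide_of_measurableSet
          (IMAux.isClosed_ATset_mem f σ).measurableSet
      · ext y
        simp only [Set.mem_preimage]
        constructor
        · intro hy
          by_contra hyB
          have hyc : y ∈ Bᶜ := hyB
          rw [← hfr] at hyc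
          obtain ⟨z, rfl⟩ := hyc
          obtain ⟨B', hB'inf, hsub⟩ := IMAux.forward f z
          exact hy B' hB'inf fun σ hσ => by simpa using hsub hσ
        · intro hyB B' hB'inf hsub
          have hsub' : MB B' ⊆ IMAux.ATset (IMAux.Tset f y) := fun σ hσ => by
            simpa using hsub hσ
          obtain ⟨z, hz⟩ := IMAux.backward hf hB'inf hsub'
          have : y ∈ Bᶜ := hfr ▸ ⟨z, hz⟩
          exact this hyB
end

section
/- The family of all trees T over ω such that M(B) ⊆ T for some infinite B ⊆ ω, regarded as a subset of the Polish space Tree_ω, is Σ¹₁-complete: it is analytic, and for every Polish space Y and every analytic set B ⊆ Y there is a Borel measurable function f : Y → Tree_ω whose preimage of this family equals B. -/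
open MeasureTheory

/-- The Polish space `Tree_ω` of all trees over `ω` (subsets of `ω^{<ω}` closed under
initial segments), as a subspace of the Cantor space `2^{ω^{<ω}} ≅ P(ω^{<ω})`. -/
abbrev TreeOmega : Type :=
  {x : List ℕ → Bool // ∀ σ τ : List ℕ, x σ = true → τ <+: σ → x τ = true}

/-- The family of all trees `T` over `ω` with `M(B) ⊆ T` for some infinite `B ⊆ ω`. -/
def mathiasBushFam : Set TreeOmega :=
  {T | ∃ B : Set ℕ, B.Infinite ∧ MB B ⊆ {σ | T.1 σ = true}}

/-!
The family is the projection to the first coordinate of the Borel set of pairs `(T, b)` with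
`b : ℕ → ℕ` strictly increasing and `M(range b) ⊆ T`, hence analytic.

For hardness write a nonempty analytic set as the range of a continuous `g : ℕ^ℕ → Y` and send
`y` to the tree `T_y` of all `σ` that dominate, coordinatewise, some `τ` of the same length with
`y ∈ cl g[N_τ]`. If `y = g x`, then `M(range b) ⊆ T_y` for every strictly increasing `b ≥ x`.
Conversely, if `M(B) ⊆ T_y` and `b` enumerates `B`, the initial segments of `b` lie in `T_y`, so
for every `n` some `x ≤ b` has `y ∈ cl g[N_{x|n}]`. By compactness of `{x | x ≤ b}` a single `x`
works for all `n`, and continuity of `g` gives `y = g x`.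
-/

open Set PiNat Topology

lemma isClosed_setOf_isTree :
    IsClosed {x : List ℕ → Bool | ∀ σ τ : List ℕ, x σ = true → τ <+: σ → x τ = true} := by
  simp only [ofPred_forall]
  refine isClosed_iInter fun σ => isClosed_iInter fun τ => ?_
  exact (isClosed_discrete {p : Bool × Bool | p.1 = true → τ <+: σ → p.2 = true}).preimage
    (by fun_prop : Continuous fun x : List ℕ → Bool => (x σ, x τ))

instance : PolishSpace TreeOmega :=
  have : PolishSpace (List ℕ → Bool) :=
    instPolishSpaceOfSeparableSpaceOfIsCompletelyMetrizableSpace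
  isClosed_setOf_isTree.polishSpace

section Cylinder

variable {E : ℕ → Type*} [∀ n, TopologicalSpace (E n)] [∀ n, DiscreteTopology (E n)]

lemma exists_cylinder_subset_of_mem_nhds {x : ∀ n, E n} {U : Set (∀ n, E n)} (hU : U ∈ 𝓝 x) :
    ∃ n, cylinder x n ⊆ U := by
  obtain ⟨_, ⟨z, n, rfl⟩, hx, hsub⟩ := (isTopologicalBasis_cylinders E).mem_nhds_iff.1 hU
  exact ⟨n, (mem_cylinder_iff_eq.1 hx).le.trans hsub⟩

lemma isClosed_setOf_cylinder (P : Set (∀ n, E n) → Prop) (n : ℕ) :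
    IsClosed {x | P (cylinder x n)} := by
  refine isOpen_compl_iff.1 <| isOpen_iff_forall_mem_open.2 fun x hx =>
    ⟨cylinder x n, fun z hz => ?_, isOpen_cylinder E x n, self_mem_cylinder x n⟩
  rwa [mem_compl_iff, mem_ofPred_eq, mem_cylinder_iff_eq.1 hz]

variable {Y : Type*} [TopologicalSpace Y] [T2Space Y] {g : (∀ n, E n) → Y}

lemma eq_of_forall_mem_closure_image_cylinder (hg : Continuous g) {x : ∀ n, E n} {y : Y}
    (h : ∀ n, y ∈ closure (g '' cylinder x n)) : g x = y := by
  by_contra hne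
  obtain ⟨U, V, hU, hV, hxU, hyV, hUV⟩ := t2_separation hne
  obtain ⟨n, hn⟩ := exists_cylinder_subset_of_mem_nhds (hg.continuousAt.preimage_mem_nhds
    (hU.mem_nhds hxU))
  have : closure (g '' cylinder x n) ⊆ Vᶜ :=
    closure_minimal ((image_subset_iff.2 hn).trans hUV.subset_compl_right) hV.isClosed_compl
  exact this (h n) hyV

lemma mem_image_of_forall_mem_closure_image_cylinder (hg : Continuous g)
    {K : Set (∀ n, E n)} (hK : IsCompact K) {y : Y}
    (h : ∀ n, ∃ x ∈ K, y ∈ closure (g '' cylinder x n)) : y ∈ g '' K := by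
  set C : ℕ → Set (∀ n, E n) := fun n => K ∩ {x | y ∈ closure (g '' cylinder x n)}
  have hclosed n : IsClosed {x | y ∈ closure (g '' cylinder x n)} :=
    isClosed_setOf_cylinder (fun s => y ∈ closure (g '' s)) n
  have hC : (⋂ n, C n).Nonempty := by
    refine IsCompact.nonempty_iInter_of_sequence_nonempty_isCompact_isClosed C
      (fun n => inter_subset_inter_right K fun x hx => ?_) h
      (hK.inter_right (hclosed 0)) (fun n => hK.isClosed.inter (hclosed n))
    exact closure_mono (image_mono (cylinder_anti x n.le_succ)) hx
  obtain ⟨x, hx⟩ := hC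
  rw [mem_iInter] at hx
  exact ⟨x, (hx 0).1, eq_of_forall_mem_closure_image_cylinder hg fun n => (hx n).2⟩

end Cylinder

lemma getD_map_range {α : Type*} (x : ℕ → α) (d : α) {n i : ℕ} (hi : i < n) :
    ((List.range n).map x).getD i d = x i := by
  simp [List.getD_eq_getElem?_getD, List.getElem?_range hi]

lemma mem_cylinder_getD_map_range (x : ℕ → ℕ) (n : ℕ) :
    x ∈ cylinder (((List.range n).map x).getD · 0) n :=
  fun _ hi => (getD_map_range x 0 hi).symm

lemma map_range_mem_MB {B : Set ℕ} {b : ℕ → ℕ} (hb : StrictMono b) (hbB : ∀ i, b i ∈ B) (n : ℕ) :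
    (List.range n).map b ∈ MB B := by
  refine ⟨by simpa using fun i _ => hbB i, ?_⟩
  exact List.pairwise_map.2 <| (List.pairwise_lt_range).imp fun h => hb h

lemma le_getD_of_mem_MB_range {b : ℕ → ℕ} (hb : StrictMono b) {σ : List ℕ}
    (hσ : σ ∈ MB (range b)) : ∀ i < σ.length, b i ≤ σ.getD i 0 := by
  obtain ⟨hmem, hsorted⟩ := hσ
  have hrange : ∀ i < σ.length, ∃ k, b k = σ.getD i 0 := fun i hi =>
    hmem _ (by rw [List.getD_eq_getElem _ _ hi]; exact List.getElem_mem hi)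
  intro i hi
  induction i with
  | zero =>
    obtain ⟨k, hk⟩ := hrange 0 hi
    exact hk ▸ hb.monotone k.zero_le
  | succ i ih =>
    obtain ⟨k, hk⟩ := hrange (i + 1) hi
    have hlt : σ.getD i 0 < σ.getD (i + 1) 0 := by
      rw [List.getD_eq_getElem _ _ hi, List.getD_eq_getElem _ _ (by omega)]
      exact List.pairwise_iff_getElem.1 hsorted i (i + 1) (by omega) hi (by omega)
    have hik : i < k := hb.lt_iff_lt.1 (lt_of_le_of_lt (ih (by omega)) (hk ▸ hlt))
    exact hk ▸ hb.monotone hik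

lemma exists_strictMono_ge (x : ℕ → ℕ) : ∃ b : ℕ → ℕ, StrictMono b ∧ x ≤ b :=
  ⟨fun k => ∑ i ∈ Finset.range (k + 1), (x i + 1),
    strictMono_nat_of_lt_succ fun k => by simp [Finset.sum_range_succ _ (k + 1)],
    fun k => (x k).le_succ.trans <| Finset.single_le_sum (f := fun i => x i + 1)
      (fun _ _ => Nat.zero_le _) (Finset.self_mem_range_succ k)⟩

section ReductionTree

variable {Y : Type*} [TopologicalSpace Y]

/-- The tree `T_y`; `τ.getD · 0` pads `τ` with zeros, and only its first `σ.length` entries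
matter. -/
def reductionTreeSet (g : (ℕ → ℕ) → Y) (y : Y) : Set (List ℕ) :=
  {σ | ∃ τ : List ℕ, (∀ i < σ.length, τ.getD i 0 ≤ σ.getD i 0) ∧
    y ∈ closure (g '' cylinder (τ.getD · 0) σ.length)}

lemma reductionTreeSet_of_prefix {g : (ℕ → ℕ) → Y} {y : Y} {σ σ' : List ℕ}
    (hσ : σ ∈ reductionTreeSet g y) (h : σ' <+: σ) : σ' ∈ reductionTreeSet g y := by
  obtain ⟨τ, hτ, hy⟩ := hσ
  refine ⟨τ, fun i hi => ?_, closure_mono (image_mono (cylinder_anti _ h.length_le)) hy⟩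
  rw [List.getD_eq_getElem _ _ hi, h.getElem hi, ← List.getD_eq_getElem]
  exact hτ i (hi.trans_le h.length_le)

open Classical in
noncomputable def reductionTree (g : (ℕ → ℕ) → Y) (y : Y) : TreeOmega :=
  ⟨fun σ => decide (σ ∈ reductionTreeSet g y), fun _ _ hσ h =>
    decide_eq_true (reductionTreeSet_of_prefix (of_decide_eq_true hσ) h)⟩

open Classical in
lemma reductionTree_apply_eq_true {g : (ℕ → ℕ) → Y} {y : Y} {σ : List ℕ} :
    (reductionTree g y).1 σ = true ↔ σ ∈ reductionTreeSet g y :=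
  decide_eq_true_iff

lemma measurable_reductionTree [MeasurableSpace Y] [OpensMeasurableSpace Y]
    (g : (ℕ → ℕ) → Y) : Measurable (reductionTree g) := by
  refine Measurable.subtype_mk (measurable_pi_iff.2 fun σ => measurable_to_bool ?_)
  have : Measurable fun y => σ ∈ reductionTreeSet g y :=
    Measurable.exists fun τ => measurable_const.and isClosed_closure.measurableSet.mem
  simpa only [reductionTree, preimage, mem_singleton_iff, decide_eq_true_eq] using this.setOf

lemma reductionTree_mem_mathiasBushFam (g : (ℕ → ℕ) → Y) (x : ℕ → ℕ) :
    reductionTree g (g x) ∈ mathiasBushFam := by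
  obtain ⟨b, hb, hxb⟩ := exists_strictMono_ge x
  refine ⟨range b, infinite_range_of_injective hb.injective, fun σ hσ =>
    reductionTree_apply_eq_true.2 ⟨(List.range σ.length).map x, fun i hi => ?_,
      subset_closure (mem_image_of_mem g (mem_cylinder_getD_map_range x _))⟩⟩
  rw [getD_map_range x 0 hi]
  exact (hxb i).trans (le_getD_of_mem_MB_range hb hσ i hi)

lemma mem_range_of_reductionTree_mem [T2Space Y] {g : (ℕ → ℕ) → Y} (hg : Continuous g) {y : Y}
    (hy : reductionTree g y ∈ mathiasBushFam) : y ∈ range g := by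
  obtain ⟨B, hB, hMB⟩ := hy
  set b := Nat.nth (· ∈ B)
  have hwit : ∀ n, ∃ x ∈ Iic b, y ∈ closure (g '' cylinder x n) := by
    intro n
    obtain ⟨τ, hτ, hy⟩ := reductionTree_apply_eq_true.1 <|
      hMB (map_range_mem_MB (Nat.nth_strictMono hB) (Nat.nth_mem_of_infinite hB) n)
    simp only [List.length_map, List.length_range] at hτ hy
    refine ⟨(τ.getD · 0) ⊓ b, fun i => inf_le_right, ?_⟩
    have hcyl : cylinder ((τ.getD · 0) ⊓ b) n = cylinder (τ.getD · 0) n :=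
      mem_cylinder_iff_eq.1 fun i hi => inf_eq_left.2 (getD_map_range b 0 hi ▸ hτ i hi)
    rwa [hcyl]
  have hK : IsCompact (Iic b) :=
    pi_univ_Iic b ▸ isCompact_univ_pi fun i => (finite_Iic (b i)).isCompact
  obtain ⟨x, -, rfl⟩ := mem_image_of_forall_mem_closure_image_cylinder hg hK hwit
  exact mem_range_self x

lemma preimage_reductionTree_mathiasBushFam [T2Space Y] {g : (ℕ → ℕ) → Y}
    (hg : Continuous g) : reductionTree g ⁻¹' mathiasBushFam = range g :=
  Subset.antisymm (fun _ => mem_range_of_reductionTree_mem hg)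
    (range_subset_iff.2 (reductionTree_mem_mathiasBushFam g))

end ReductionTree

lemma mathiasBushFam_eq_image_fst :
    mathiasBushFam = Prod.fst ''
      {p : TreeOmega × (ℕ → ℕ) | StrictMono p.2 ∧ MB (range p.2) ⊆ {σ | p.1.1 σ = true}} := by
  ext T
  constructor
  · rintro ⟨B, hB, hMB⟩
    exact ⟨(T, Nat.nth (· ∈ B)), ⟨Nat.nth_strictMono hB, Nat.range_nth_of_infinite hB ▸ hMB⟩, rfl⟩
  · rintro ⟨⟨T, b⟩, ⟨hb, hMB⟩, rfl⟩
    exact ⟨range b, infinite_range_of_injective hb.injective, hMB⟩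

lemma analyticSet_mathiasBushFam : AnalyticSet mathiasBushFam := by
  rw [mathiasBushFam_eq_image_fst]
  refine MeasurableSet.analyticSet_image ?_ measurable_fst
  have hT (σ : List ℕ) : Measurable fun p : TreeOmega × (ℕ → ℕ) => p.1.1 σ = true :=
    (Measurable.of_discrete (f := fun b : Bool => b = true)).comp
      ((measurable_pi_apply σ).comp (measurable_subtype_coe.comp measurable_fst))
  refine Measurable.setOf ?_
  simp only [StrictMono, MB, subset_def, mem_ofPred_eq, mem_range]
  fun_prop

def emptyTree : TreeOmega := ⟨fun _ => false, fun _ _ h _ => h⟩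

lemma emptyTree_notMem_mathiasBushFam : emptyTree ∉ mathiasBushFam :=
  fun ⟨_, _, hMB⟩ => Bool.false_ne_true (hMB ⟨List.forall_mem_nil _, List.Pairwise.nil⟩)

/-- The family of trees containing some `M(B)` is `Σ¹₁`-complete: it is analytic, and
every analytic subset of every Polish space Borel-reduces to it. -/
theorem mathiasBushFam_analytic_complete :
    AnalyticSet mathiasBushFam ∧
      ∀ (Y : Type) [TopologicalSpace Y] [PolishSpace Y]
        [MeasurableSpace Y] [BorelSpace Y] (B : Set Y),
        AnalyticSet B →
          ∃ f : Y → TreeOmega, Measurable f ∧ f ⁻¹' mathiasBushFam = B := by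
  refine ⟨analyticSet_mathiasBushFam, fun Y _ _ _ _ B hB => ?_⟩
  rw [AnalyticSet] at hB
  rcases hB with rfl | ⟨g, hg, rfl⟩
  · exact ⟨fun _ => emptyTree, measurable_const,
      preimage_const_of_notMem emptyTree_notMem_mathiasBushFam⟩
  · exact ⟨reductionTree g, measurable_reductionTree g, preimage_reductionTree_mathiasBushFam hg⟩
end

section
/- The family of all trees over ω containing a Miller tree, regarded as a subset of the Polish space Tree_ω, is Σ¹₁-complete: it is analytic, and for every Polish space Y and every analytic set B ⊆ Y there is a Borel measurable function f : Y → Tree_ω whose preimage of this family equals B. -/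
open MeasureTheory

/-- `S ⊆ ω^{<ω}` is a tree: closed under initial segments. -/
def IsTreeSet (S : Set (List ℕ)) : Prop :=
  ∀ σ ∈ S, ∀ τ : List ℕ, τ <+: σ → τ ∈ S

/-- A Miller tree: a nonempty tree in which every node extends to an
infinitely-splitting node. -/
def IsMillerTree (S : Set (List ℕ)) : Prop :=
  IsTreeSet S ∧ S.Nonempty ∧
    ∀ σ ∈ S, ∃ τ ∈ S, σ <+: τ ∧ {n : ℕ | τ ++ [n] ∈ S}.Infinite

/-- The family of all trees over `ω` containing a Miller tree. -/
def millerFam : Set TreeOmega :=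
  {T | ∃ S : Set (List ℕ), IsMillerTree S ∧ S ⊆ {σ | T.1 σ = true}}

/-!
`millerFam` is analytic because a tree contains a Miller tree iff some `x : List ℕ → Bool` codes
a Miller tree below it, a Borel condition on the pair: `millerFam` is the projection of a Borel
subset of a Polish space.

For completeness write an analytic `B ⊆ Y` as the range of a continuous `g : ℕ^ℕ → Y`. The tree
of those `σ` extended by some `x` with `g x` within `2^{-|σ|}` of `y` has an infinite branch iff
`y ∈ B`. Pulling it back along `evens` (keep the entries at even positions) leaves the odd
positions free, so a branch `z` yields the Miller tree of all sequences whose even entries follow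
`z`; conversely a Miller tree has a branch, whose even entries form a branch of the original tree.
Each node lies in the tree for an open set of `y`, so `y ↦ tree` is Borel.
-/

theorem isClosed_setOf_prefixClosed (α : Type*) :
    IsClosed {x : List α → Bool | ∀ σ τ : List α, x σ = true → τ <+: σ → x τ = true} := by
  have hclopen (σ : List α) : IsClopen {x : List α → Bool | x σ = true} :=
    (isClopen_discrete {true}).preimage (continuous_apply σ)
  simp only [Set.ofPred_forall]
  exact isClosed_iInter fun σ => isClosed_iInter fun τ =>
    isClosed_imp (hclopen σ).isOpen (isClosed_imp isOpen_const (hclopen τ).isClosed)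

instance : PolishSpace (List ℕ → Bool) := {}

instance inst_s10 : PolishSpace TreeOmega := (isClosed_setOf_prefixClosed ℕ).polishSpace

namespace TreeOmega

open Classical in
noncomputable def ofTreeSet (S : Set (List ℕ)) (hS : IsTreeSet S) : TreeOmega :=
  ⟨fun σ => decide (σ ∈ S), fun σ τ hσ hτσ => by simpa using hS σ (by simpa using hσ) τ hτσ⟩

theorem ofTreeSet_mem_millerFam_iff {S : Set (List ℕ)} (hS : IsTreeSet S) :
    ofTreeSet S hS ∈ millerFam ↔ ∃ S', IsMillerTree S' ∧ S' ⊆ S := by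
  simp [millerFam, ofTreeSet, Set.subset_def]

theorem measurable_ofTreeSet {Y : Type*} [MeasurableSpace Y] {T : Y → Set (List ℕ)}
    (hT : ∀ y, IsTreeSet (T y)) (hmeas : ∀ σ, MeasurableSet {y | σ ∈ T y}) :
    Measurable fun y => ofTreeSet (T y) (hT y) := by
  classical
  exact Measurable.subtype_mk <| measurable_pi_lambda _ fun σ =>
    (Measurable.of_discrete (f := fun P : Prop => decide P)).comp
      (measurableSet_setOfPred.1 (hmeas σ))

end TreeOmega

theorem measurableSet_setOf_isMillerTree :
    MeasurableSet {x : List ℕ → Bool | IsMillerTree {σ | x σ = true}} := by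
  simp only [IsMillerTree, IsTreeSet, Set.Nonempty, Set.infinite_iff_exists_gt,
    measurableSet_setOfPred]
  fun_prop

theorem analyticSet_millerFam : AnalyticSet millerFam := by
  classical
  have hcoord (σ : List ℕ) : Measurable fun p : TreeOmega × (List ℕ → Bool) => p.1.1 σ :=
    (measurable_pi_apply σ).comp (by fun_prop)
  let C : Set (TreeOmega × (List ℕ → Bool)) :=
    {p | IsMillerTree {σ | p.2 σ = true} ∧ ∀ σ, p.2 σ = true → p.1.1 σ = true}
  have hC : MeasurableSet C :=
    (measurableSet_setOf_isMillerTree.preimage measurable_snd).inter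
      (measurableSet_setOfPred.2 (by fun_prop))
  convert hC.analyticSet.image_of_continuous continuous_fst
  ext T
  constructor
  · rintro ⟨S, hS, hST⟩
    exact ⟨(T, fun σ => decide (σ ∈ S)), ⟨by simpa using hS, fun σ hσ => hST (by simpa using hσ)⟩,
      rfl⟩
  · rintro ⟨⟨T, x⟩, ⟨hx, hxT⟩, rfl⟩
    exact ⟨_, hx, hxT⟩

section Sequences

variable {α : Type*}

def IsInitSeg (σ : List α) (x : ℕ → α) : Prop :=
  ∀ i (h : i < σ.length), σ[i] = x i

def IsBranch (T : Set (List α)) (x : ℕ → α) : Prop :=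
  ∀ n, (List.range n).map x ∈ T

theorem isInitSeg_map_range (x : ℕ → α) (n : ℕ) : IsInitSeg ((List.range n).map x) x := by
  simp [IsInitSeg]

theorem IsInitSeg.eq_map_range {σ : List α} {x : ℕ → α} (h : IsInitSeg σ x) :
    σ = (List.range σ.length).map x :=
  List.ext_getElem (by simp) fun i _ _ => by simp [h i]

theorem IsInitSeg.of_prefix {σ τ : List α} {x : ℕ → α} (h : IsInitSeg σ x) (hτσ : τ <+: σ) :
    IsInitSeg τ x := fun i hi => by
  rw [hτσ.getElem hi, h]

theorem IsInitSeg.append_singleton {σ : List α} {x : ℕ → α} (h : IsInitSeg σ x) :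
    IsInitSeg (σ ++ [x σ.length]) x := by
  intro i hi
  rcases (show i < σ.length ∨ i = σ.length by simp at hi; omega) with hi | rfl
  · rw [List.getElem_append_left hi, h]
  · simp

theorem exists_isBranch_of_forall_exists_append_mem {T : Set (List α)} (h₀ : [] ∈ T)
    (h : ∀ σ ∈ T, ∃ a, σ ++ [a] ∈ T) : ∃ x, IsBranch T x := by
  choose next hnext using h
  let node : ℕ → T := fun n =>
    Nat.rec ⟨[], h₀⟩ (fun _ σ => ⟨σ.1 ++ [next σ.1 σ.2], hnext σ.1 σ.2⟩) n
  refine ⟨fun n => next (node n).1 (node n).2, fun n => ?_⟩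
  have hnode : (node n).1 = (List.range n).map fun k => next (node k).1 (node k).2 := by
    induction n with
    | zero => rfl
    | succ n ih => rw [List.range_succ, List.map_append, ← ih]; rfl
  exact hnode ▸ (node n).2

end Sequences

namespace List

variable {α : Type*}

def evens (σ : List α) : List α :=
  List.ofFn fun i : Fin ((σ.length + 1) / 2) => σ[2 * i.1]

@[simp]
theorem length_evens (σ : List α) : (evens σ).length = (σ.length + 1) / 2 := by
  simp [evens]

@[simp]
theorem getElem_evens (σ : List α) {i : ℕ} (h : i < (evens σ).length) :
    (evens σ)[i] = σ[2 * i]'(by simp at h; omega) := by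
  simp [evens]

theorem IsPrefix.evens {σ τ : List α} (h : τ <+: σ) : τ.evens <+: σ.evens := by
  have := h.length_le
  refine List.prefix_iff_getElem.2 ⟨by simp; omega, fun i hi => ?_⟩
  simp [h.getElem]

theorem evens_map_range_two_mul (x : ℕ → α) (n : ℕ) :
    evens ((List.range (2 * n)).map x) = (List.range n).map fun i => x (2 * i) :=
  List.ext_getElem (by simp; omega) fun i _ _ => by simp

theorem evens_append_singleton_of_even {σ : List α} (h : Even σ.length) (a : α) :
    evens (σ ++ [a]) = evens σ ++ [a] := by
  obtain ⟨k, hk⟩ := h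
  refine List.ext_getElem (by simp; omega) fun i h₁ h₂ => ?_
  simp only [getElem_evens]
  rcases (show i < k ∨ i = k by simp at h₁; omega) with hi | rfl
  · rw [List.getElem_append_left (by omega), List.getElem_append_left (by simp; omega)]
    simp
  · rw [List.getElem_append_right (by omega), List.getElem_append_right (by simp; omega)]
    simp

theorem evens_append_singleton_of_odd {σ : List α} (h : Odd σ.length) (a : α) :
    evens (σ ++ [a]) = evens σ := by
  obtain ⟨k, hk⟩ := h
  refine List.ext_getElem (by simp; omega) fun i _ h₂ => ?_
  simp only [getElem_evens]
  rw [List.getElem_append_left (by simp at h₂; omega)]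

end List

theorem IsTreeSet.nil_mem {S : Set (List ℕ)} (hS : IsTreeSet S) (hne : S.Nonempty) : [] ∈ S :=
  let ⟨σ, hσ⟩ := hne
  hS σ hσ [] σ.nil_prefix

theorem IsTreeSet.preimage_evens {T : Set (List ℕ)} (hT : IsTreeSet T) :
    IsTreeSet (List.evens ⁻¹' T) :=
  fun _ hσ _ hτσ => hT _ hσ _ hτσ.evens

namespace IsMillerTree

variable {S : Set (List ℕ)}

theorem exists_append_mem (hS : IsMillerTree S) {σ : List ℕ} (hσ : σ ∈ S) :
    ∃ a, σ ++ [a] ∈ S := by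
  obtain ⟨τ, -, hστ, hinf⟩ := hS.2.2 σ hσ
  obtain ⟨n, hn⟩ := hinf.nonempty
  have hpre : σ <+: τ ++ [n] := hστ.trans (τ.prefix_append [n])
  have hlt : σ.length < (τ ++ [n]).length := by have := hστ.length_le; simp; omega
  have htake := List.take_append_getElem hlt
  rw [← List.prefix_iff_eq_take.1 hpre] at htake
  exact ⟨_, hS.1 _ hn _ (htake ▸ List.take_prefix _ _)⟩

theorem exists_isBranch (hS : IsMillerTree S) : ∃ x, IsBranch S x :=
  exists_isBranch_of_forall_exists_append_mem (hS.1.nil_mem hS.2.1) fun _ => hS.exists_append_mem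

end IsMillerTree

def paddedTree (z : ℕ → ℕ) : Set (List ℕ) :=
  {σ | IsInitSeg σ.evens z}

theorem isMillerTree_paddedTree (z : ℕ → ℕ) : IsMillerTree (paddedTree z) := by
  have hsplit : ∀ τ ∈ paddedTree z, Odd τ.length → {n | τ ++ [n] ∈ paddedTree z}.Infinite := by
    intro τ hτ hodd
    refine Set.infinite_univ.mono fun n _ => ?_
    simpa [paddedTree, List.evens_append_singleton_of_odd hodd] using hτ
  refine ⟨fun σ hσ τ hτσ => hσ.of_prefix hτσ.evens,
    ⟨[], by simp [paddedTree, IsInitSeg]⟩, fun σ hσ => ?_⟩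
  rcases Nat.even_or_odd σ.length with heven | hodd
  · have hlen : σ.evens.length = σ.length / 2 := by
      obtain ⟨k, hk⟩ := heven; simp; omega
    have hmem : σ ++ [z (σ.length / 2)] ∈ paddedTree z := by
      simpa [paddedTree, List.evens_append_singleton_of_even heven, hlen]
        using hσ.append_singleton
    exact ⟨_, hmem, σ.prefix_append _, hsplit _ hmem (by simpa using heven.add_one)⟩
  · exact ⟨σ, hσ, List.prefix_refl σ, hsplit σ hσ hodd⟩

theorem exists_isMillerTree_subset_preimage_evens_iff {T : Set (List ℕ)} :
    (∃ S, IsMillerTree S ∧ S ⊆ List.evens ⁻¹' T) ↔ ∃ x, IsBranch T x := by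
  constructor
  · rintro ⟨S, hS, hST⟩
    obtain ⟨x, hx⟩ := hS.exists_isBranch
    exact ⟨fun i => x (2 * i), fun n => List.evens_map_range_two_mul x n ▸ hST (hx (2 * n))⟩
  · rintro ⟨z, hz⟩
    refine ⟨paddedTree z, isMillerTree_paddedTree z, fun σ hσ => ?_⟩
    rw [Set.mem_preimage, hσ.eq_map_range]
    exact hz _

section Approximation

open Filter Topology

variable {Y : Type*} [MetricSpace Y] (g : (ℕ → ℕ) → Y)

def approxTree (y : Y) : Set (List ℕ) :=
  {σ | ∃ x, IsInitSeg σ x ∧ dist (g x) y < (1 / 2 : ℝ) ^ σ.length}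

theorem isTreeSet_approxTree (y : Y) : IsTreeSet (approxTree g y) := by
  rintro σ ⟨x, hx, hdist⟩ τ hτσ
  exact ⟨x, hx.of_prefix hτσ,
    hdist.trans_le (pow_le_pow_of_le_one (by norm_num) (by norm_num) hτσ.length_le)⟩

theorem isOpen_setOf_mem_approxTree (σ : List ℕ) : IsOpen {y | σ ∈ approxTree g y} := by
  have : {y | σ ∈ approxTree g y} =
      ⋃ (x) (_ : IsInitSeg σ x), Metric.ball (g x) ((1 / 2 : ℝ) ^ σ.length) := by
    ext y
    simp [approxTree, dist_comm]
  rw [this]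
  exact isOpen_biUnion fun x _ => Metric.isOpen_ball

theorem isBranch_approxTree (x : ℕ → ℕ) : IsBranch (approxTree g (g x)) x :=
  fun n => ⟨x, isInitSeg_map_range x n, by simp⟩

theorem eq_of_isBranch_approxTree (hg : Continuous g) {y : Y} {z : ℕ → ℕ}
    (hz : IsBranch (approxTree g y) z) : g z = y := by
  choose x hx hdist using hz
  have hxz : Tendsto x atTop (𝓝 z) := by
    refine tendsto_pi_nhds.2 fun i => tendsto_const_nhds.congr' ?_
    filter_upwards [eventually_gt_atTop i] with n hn
    have := hx n i (by simpa)
    rwa [List.getElem_map, List.getElem_range] at this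
  have hy : Tendsto (fun n => g (x n)) atTop (𝓝 y) := by
    refine tendsto_iff_dist_tendsto_zero.2 (squeeze_zero (fun n => dist_nonneg)
      (fun n => (hdist n).le) ?_)
    simpa using
      tendsto_pow_atTop_nhds_zero_of_lt_one (r := (1 / 2 : ℝ)) (by norm_num) (by norm_num)
  exact tendsto_nhds_unique ((hg.tendsto z).comp hxz) hy

end Approximation

/-- The family of trees containing a Miller tree is `Σ¹₁`-complete: it is analytic,
and every analytic subset of every Polish space Borel-reduces to it. -/
theorem millerFam_analytic_complete :
    AnalyticSet millerFam ∧
      ∀ (Y : Type) [TopologicalSpace Y] [PolishSpace Y]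
        [MeasurableSpace Y] [BorelSpace Y] (B : Set Y),
        AnalyticSet B →
          ∃ f : Y → TreeOmega, Measurable f ∧ f ⁻¹' millerFam = B := by
  refine ⟨analyticSet_millerFam, fun Y _ _ _ _ B hB => ?_⟩
  rw [AnalyticSet] at hB
  rcases hB with rfl | ⟨g, hg, rfl⟩
  · have hempty : IsTreeSet ∅ := fun _ h => h.elim
    refine ⟨fun _ => TreeOmega.ofTreeSet ∅ hempty, measurable_const, ?_⟩
    ext y
    simpa [TreeOmega.ofTreeSet_mem_millerFam_iff]
      using fun hS : IsMillerTree ∅ => hS.2.1.ne_empty rfl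
  · let := TopologicalSpace.metrizableSpaceMetric Y
    have hT (y : Y) := (isTreeSet_approxTree g y).preimage_evens
    refine ⟨fun y => TreeOmega.ofTreeSet _ (hT y), TreeOmega.measurable_ofTreeSet hT fun σ =>
      (isOpen_setOf_mem_approxTree g σ.evens).measurableSet, ?_⟩
    ext y
    simp only [Set.mem_preimage, TreeOmega.ofTreeSet_mem_millerFam_iff,
      exists_isMillerTree_subset_preimage_evens_iff, Set.mem_range]
    exact ⟨fun ⟨z, hz⟩ => ⟨z, eq_of_isBranch_approxTree g hg hz⟩,
      fun ⟨z, hz⟩ => ⟨z, hz ▸ isBranch_approxTree g z⟩⟩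
end

section
/- Let n, m ≥ 2 with n not dividing m. Then the set A = { k ∈ ω : n ∤ k } satisfies FS_m({ kn + 1 : k ∈ ω }) ⊆ A (so A is an IP_m-set), but A is not an IP_n-set. -/
/-- For `n, m ≥ 2` with `n ∤ m`, the set `A = { k : n ∤ k }` satisfies
`FS_m({ kn + 1 : k ∈ ω }) ⊆ A` (so `A` is an IP_m-set), but `A` is not an IP_n-set. -/
theorem witness_IPm_not_IPn (n m : ℕ) (hn : 2 ≤ n) (hm : 2 ≤ m) (hnm : ¬ n ∣ m) :
    FSk m {j : ℕ | ∃ k : ℕ, j = k * n + 1} ⊆ {k : ℕ | ¬ n ∣ k} ∧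
    IsIPk m {k : ℕ | ¬ n ∣ k} ∧
    ¬ IsIPk n {k : ℕ | ¬ n ∣ k} := by
  have h1 : FSk m {j : ℕ | ∃ k : ℕ, j = k * n + 1} ⊆ {k : ℕ | ¬ n ∣ k} := by
    rintro x ⟨F, hFB, hcard, hsum⟩
    intro hdvd
    apply hnm
    have hx : ((x : ℕ) : ZMod n) = 0 := (ZMod.natCast_eq_zero_iff x n).2 hdvd
    rw [← ZMod.natCast_eq_zero_iff]
    have : ((x : ℕ) : ZMod n) = (m : ZMod n) := by
      rw [← hsum, Nat.cast_sum, ← hcard]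
      rw [Finset.sum_congr rfl (fun i hi => ?_), Finset.sum_const, nsmul_eq_mul, mul_one]
      obtain ⟨k, hk⟩ := hFB hi
      show ((i : ℕ) : ZMod n) = 1
      rw [hk]
      push_cast
      simp [ZMod.natCast_self]
    rw [← this, hx]
  refine ⟨h1, ⟨_, ?_, h1⟩, ?_⟩
  · apply Set.infinite_of_injective_forall_mem (f := fun k : ℕ => k * n + 1)
    · intro a b hab
      simp only [add_left_inj] at hab
      exact Nat.eq_of_mul_eq_mul_right (by omega) hab
    · intro k; exact ⟨k, rfl⟩
  · rintro ⟨B, hBinf, hBsub⟩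
    -- find infinitely many elements of B with the same residue mod n
    have : ∃ r : ZMod n, {b ∈ B | (b : ZMod n) = r}.Infinite := by
      by_contra h
      push_neg at h
      have : B = ⋃ r : ZMod n, {b ∈ B | (b : ZMod n) = r} := by
        ext b; simp only [Set.mem_iUnion, Set.mem_setOf_eq]
        exact ⟨fun hb => ⟨b, hb, rfl⟩, fun ⟨r, hb, _⟩ => hb⟩
      have : B.Finite := by
        rw [this]
        haveI : NeZero n := ⟨by omega⟩
        exact Set.finite_iUnion h
      exact hBinf this
    obtain ⟨r, hr⟩ := this
    obtain ⟨F, hFsub, hFcard⟩ := hr.exists_subset_card_eq n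
    have hFB : ↑F ⊆ B := fun x hx => (hFsub hx).1
    have : ∑ i ∈ F, i ∈ FSk n B := ⟨F, hFB, hFcard, rfl⟩
    apply hBsub this
    rw [← ZMod.natCast_eq_zero_iff, Nat.cast_sum]
    rw [Finset.sum_congr rfl (fun i hi => (hFsub hi).2), Finset.sum_const, hFcard,
      nsmul_eq_mul, ZMod.natCast_self, zero_mul]
end
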